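/- arXiv:math/0111087 — 6 statements merged into one kernel-verified Lean document; each statement's English description precedes it below -/
import Mathlib

section
/- If a metric space X satisfies: for every d > 0 there exist n+1 uniformly bounded families U^0, ..., U^n of d-disjoint subsets of X whose union covers X, then for every d > 0 there exists a uniformly bounded cover V of X such that every ball of radius d meets at most n+1 members of V (i.e., V has d-multiplicity at most n+1), and conversely. -/
/-!
A `2d`-disjoint family meets every ball of radius `d` at most once, so the union of `n + 1`
such families has `d`-multiplicity at most `n + 1`.

Conversely, take a uniformly bounded cover `𝒱` whose `(n + 2) d`-multiplicity is at most
`n + 1`, and let `N_i(x)` be the set of members of `𝒱` meeting the ball of radius `(i + 1) d`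
about `x`. The chain `N_0(x) ⊆ ⋯ ⊆ N_{n+1}(x)` starts nonempty and ends with at most `n + 1`
elements, so it is stationary at some step `i ≤ n`. The `i`-th family consists of the level
sets `{y | N_i(y) = N_{i+1}(y) = σ}`: points of two different level sets at distance `< d`
would give `σ ⊆ τ ⊆ σ`, and any two points of one level set meet a common member of `σ`
within distance `(i + 1) d`.
-/

open Metric Set

/-- A family of subsets of a metric space is uniformly bounded if there is a uniform
bound on the diameters of its members. -/
def UnifBounded {X : Type*} [MetricSpace X] (𝔘 : Set (Set X)) : Prop :=
  ∃ R : ℝ, ∀ U ∈ 𝔘, ∀ x ∈ U, ∀ y ∈ U, dist x y ≤ R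

/-- A family of subsets is `d`-disjoint if any two distinct members are at distance at
least `d` from each other. -/
def DDisjoint {X : Type*} [MetricSpace X] (d : ℝ) (𝔘 : Set (Set X)) : Prop :=
  ∀ U ∈ 𝔘, ∀ V ∈ 𝔘, U ≠ V → ∀ x ∈ U, ∀ y ∈ V, d ≤ dist x y

/-- A family of subsets covers `X`. -/
def IsCover {X : Type*} [MetricSpace X] (𝔘 : Set (Set X)) : Prop :=
  ∀ x : X, ∃ U ∈ 𝔘, x ∈ U

/-- A cover has `d`-multiplicity at most `m` if every ball of radius `d` meets at most
`m` members of the cover. -/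
def DMultLE {X : Type*} [MetricSpace X] (d : ℝ) (m : ℕ) (𝔘 : Set (Set X)) : Prop :=
  ∀ x : X, {U | U ∈ 𝔘 ∧ (U ∩ Metric.ball x d).Nonempty}.encard ≤ (m : ℕ∞)

lemma Set.exists_eq_succ_of_monotone_of_encard_le {α : Type*} {s : ℕ → Set α} {n : ℕ}
    (hs : Monotone s) (h0 : (s 0).Nonempty) (hn : (s (n + 1)).encard ≤ n + 1) :
    ∃ i ≤ n, s i = s (i + 1) := by
  by_contra! hne
  have hfin : ∀ i ≤ n + 1, (s i).Finite := fun i hi =>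
    (finite_of_encard_le_coe hn).subset (hs hi)
  have hgrow : ∀ k ≤ n + 1, (k : ℕ∞) + 1 ≤ (s k).encard := by
    intro k hk
    induction k with
    | zero => simpa [Order.one_le_iff_pos] using h0
    | succ k ih =>
      have hlt : (s k).encard < (s (k + 1)).encard := (hfin k (by omega)).encard_lt_encard
        ((hs k.le_succ).ssubset_of_ne (hne k (by omega)))
      calc ((k + 1 : ℕ) : ℕ∞) + 1 ≤ (s k).encard + 1 := by
            push_cast; gcongr; exact ih (by omega)
        _ ≤ (s (k + 1)).encard := Order.add_one_le_of_lt hlt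
  have := (hgrow (n + 1) le_rfl).trans hn
  norm_cast at this
  omega

section

variable {X : Type*} [MetricSpace X]

def meetingBall (𝒱 : Set (Set X)) (x : X) (r : ℝ) : Set (Set X) :=
  {V | V ∈ 𝒱 ∧ (V ∩ ball x r).Nonempty}

lemma dMultLE_iff {d : ℝ} {m : ℕ} {𝒱 : Set (Set X)} :
    DMultLE d m 𝒱 ↔ ∀ x, (meetingBall 𝒱 x d).encard ≤ m :=
  Iff.rfl

lemma meetingBall_subset_of_dist_add_le {𝒱 : Set (Set X)} {x y : X} {r s : ℝ}
    (h : dist x y + r ≤ s) : meetingBall 𝒱 x r ⊆ meetingBall 𝒱 y s := by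
  rintro V ⟨hV, p, hpV, hpx⟩
  refine ⟨hV, p, hpV, mem_ball.2 ?_⟩
  linarith [dist_triangle p x y, mem_ball.1 hpx]

lemma meetingBall_mono {𝒱 : Set (Set X)} {x : X} {r s : ℝ} (h : r ≤ s) :
    meetingBall 𝒱 x r ⊆ meetingBall 𝒱 x s :=
  meetingBall_subset_of_dist_add_le (by simpa using h)

lemma IsCover.meetingBall_nonempty {𝒱 : Set (Set X)} (hcov : IsCover 𝒱) (x : X) {r : ℝ}
    (hr : 0 < r) : (meetingBall 𝒱 x r).Nonempty :=
  let ⟨V, hV, hxV⟩ := hcov x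
  ⟨V, hV, x, hxV, mem_ball_self hr⟩

lemma DDisjoint.meetingBall_subsingleton {𝔘 : Set (Set X)} {r : ℝ} (h : DDisjoint (2 * r) 𝔘)
    (x : X) : (meetingBall 𝔘 x r).Subsingleton := by
  rintro U ⟨hU, p, hpU, hpx⟩ V ⟨hV, q, hqV, hqx⟩
  by_contra hne
  have := h U hU V hV hne p hpU q hqV
  linarith [dist_triangle_right p q x, mem_ball.1 hpx, mem_ball.1 hqx]

lemma UnifBounded.iUnion {ι : Type*} [Finite ι] {𝔘 : ι → Set (Set X)}
    (h : ∀ i, UnifBounded (𝔘 i)) : UnifBounded (⋃ i, 𝔘 i) := by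
  choose R hR using h
  obtain ⟨M, hM⟩ := (Set.finite_range R).bddAbove
  refine ⟨M, fun U hU x hx y hy => ?_⟩
  obtain ⟨i, hi⟩ := mem_iUnion.1 hU
  exact (hR i U hi x hx y hy).trans (hM (mem_range_self i))

lemma dMultLE_iUnion_of_dDisjoint {ι : Type*} [Fintype ι] {𝔘 : ι → Set (Set X)} {d : ℝ}
    (h : ∀ i, DDisjoint (2 * d) (𝔘 i)) : DMultLE d (Fintype.card ι) (⋃ i, 𝔘 i) := by
  refine dMultLE_iff.2 fun x => ?_
  have hsplit : meetingBall (⋃ i, 𝔘 i) x d = ⋃ i, meetingBall (𝔘 i) x d := by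
    ext V
    simp [meetingBall]
  calc (meetingBall (⋃ i, 𝔘 i) x d).encard
      ≤ ∑ i, (meetingBall (𝔘 i) x d).encard := hsplit ▸ encard_iUnion_le_of_fintype _
    _ ≤ ∑ _i : ι, (1 : ℕ∞) :=
        Finset.sum_le_sum fun i _ => encard_le_one_iff_subsingleton.2
          ((h i).meetingBall_subsingleton x)
    _ = Fintype.card ι := by simp

def stableSet (𝒱 : Set (Set X)) (r s : ℝ) (σ : Set (Set X)) : Set X :=
  {y | meetingBall 𝒱 y r = σ ∧ meetingBall 𝒱 y s = σ}

lemma unifBounded_range_stableSet {𝒱 : Set (Set X)} (hb : UnifBounded 𝒱) (hcov : IsCover 𝒱)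
    {r : ℝ} (hr : 0 < r) (s : ℝ) : UnifBounded (range (stableSet 𝒱 r s)) := by
  obtain ⟨R, hR⟩ := hb
  refine ⟨r + R + r, ?_⟩
  rintro _ ⟨σ, rfl⟩ x ⟨hx, -⟩ y ⟨hy, -⟩
  obtain ⟨V, hV, p, hpV, hpx⟩ := hcov.meetingBall_nonempty x hr
  obtain ⟨-, q, hqV, hqy⟩ : V ∈ meetingBall 𝒱 y r := hy ▸ hx ▸ ⟨hV, p, hpV, hpx⟩
  calc dist x y ≤ dist x p + dist p q + dist q y := dist_triangle4 x p q y
    _ ≤ r + R + r := by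
      gcongr
      · exact (mem_ball'.1 hpx).le
      · exact hR V hV p hpV q hqV
      · exact (mem_ball.1 hqy).le

lemma dDisjoint_range_stableSet (𝒱 : Set (Set X)) {r s d : ℝ} (h : r + d ≤ s) :
    DDisjoint d (range (stableSet 𝒱 r s)) := by
  rintro _ ⟨σ, rfl⟩ _ ⟨τ, rfl⟩ hne x ⟨hxr, hxs⟩ y ⟨hyr, hys⟩
  by_contra! hxy
  have hστ : σ ⊆ τ := hxr ▸ hys ▸ meetingBall_subset_of_dist_add_le (by linarith)
  have hτσ : τ ⊆ σ :=
    hyr ▸ hxs ▸ meetingBall_subset_of_dist_add_le (by rw [dist_comm]; linarith)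
  exact hne (congrArg _ (hστ.antisymm hτσ))

end

/-- Gromov's first definition of `asdim X ≤ n` (via `n+1` uniformly bounded `d`-disjoint
families covering `X`) is equivalent to Gromov's second definition (via uniformly bounded
covers of `d`-multiplicity at most `n+1`). -/
theorem asdim_families_iff_dmultiplicity (X : Type*) [MetricSpace X] (n : ℕ) :
    (∀ d : ℝ, 0 < d → ∃ 𝔘 : Fin (n + 1) → Set (Set X),
        (∀ i, UnifBounded (𝔘 i) ∧ DDisjoint d (𝔘 i)) ∧ IsCover (⋃ i, 𝔘 i)) ↔
    (∀ d : ℝ, 0 < d → ∃ 𝔙 : Set (Set X),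
        UnifBounded 𝔙 ∧ IsCover 𝔙 ∧ DMultLE d (n + 1) 𝔙) := by
  constructor
  · intro h d hd
    obtain ⟨𝔘, h𝔘, hcov⟩ := h (2 * d) (by positivity)
    refine ⟨⋃ i, 𝔘 i, .iUnion fun i => (h𝔘 i).1, hcov, ?_⟩
    simpa using dMultLE_iUnion_of_dDisjoint fun i => (h𝔘 i).2
  · intro h d hd
    obtain ⟨𝒱, hb, hcov, hmult⟩ := h ((n + 2) * d) (by positivity)
    set r : ℕ → ℝ := fun i => (i + 1) * d
    refine ⟨fun i => range (stableSet 𝒱 (r i) (r (i + 1))), fun i =>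
      ⟨unifBounded_range_stableSet hb hcov (by positivity) _,
        dDisjoint_range_stableSet 𝒱 (by simp only [r]; push_cast; linarith)⟩, fun x => ?_⟩
    have hmono : Monotone fun i => meetingBall 𝒱 x (r i) := fun i j hij =>
      meetingBall_mono (by simp only [r]; gcongr)
    obtain ⟨i, hi, hstable⟩ := exists_eq_succ_of_monotone_of_encard_le hmono
      (hcov.meetingBall_nonempty x (by positivity))
      (by simpa [r, add_assoc, one_add_one_eq_two] using dMultLE_iff.1 hmult x)
    exact ⟨_, mem_iUnion.2 ⟨⟨i, by omega⟩, mem_range_self _⟩, rfl, hstable.symm⟩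
end

section
/- For a metric space X, the following are equivalent: (1) for every d > 0 there is a uniformly bounded cover V of X with d-multiplicity at most n+1; (2) for every d > 0 there is a uniformly bounded cover U of X with multiplicity at most n+1 and Lebesgue number greater than d. -/
open Metric Set

/-- A cover has multiplicity (order) at most `m` if every point lies in at most `m`
members of the cover. -/
def MultLE {X : Type*} [MetricSpace X] (m : ℕ) (𝔘 : Set (Set X)) : Prop :=
  ∀ x : X, {U | U ∈ 𝔘 ∧ x ∈ U}.encard ≤ (m : ℕ∞)

/-- A cover has Lebesgue number greater than (or equal to) `d`: every ball of radius `d`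
is contained in some member of the cover. -/
def LebesgueGT {X : Type*} [MetricSpace X] (d : ℝ) (𝔘 : Set (Set X)) : Prop :=
  ∀ x : X, ∃ U ∈ 𝔘, Metric.ball x d ⊆ U

/-!
Thickening every member of a cover by `d` turns `d`-multiplicity into multiplicity, since a
point lies in the thickening of `V` exactly when its `d`-ball meets `V`, and gives Lebesgue
number `d`. Conversely, shrinking every member `U` to the points whose `d`-ball lies in `U`
turns Lebesgue number `d` into covering and multiplicity into `d`-multiplicity. Both operations
change diameters by at most `2d`.
-/

def shrinking {X : Type*} [MetricSpace X] (d : ℝ) (U : Set X) : Set X :=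
  {y | ball y d ⊆ U}

theorem Set.encard_sep_image_le {α β : Type*} {s : Set α} {g : α → β} {p : β → Prop}
    {q : α → Prop} (h : ∀ a ∈ s, p (g a) → q a) :
    {b | b ∈ g '' s ∧ p b}.encard ≤ {a | a ∈ s ∧ q a}.encard :=
  calc {b | b ∈ g '' s ∧ p b}.encard ≤ (g '' {a | a ∈ s ∧ q a}).encard := by
        refine encard_le_encard ?_
        rintro _ ⟨⟨a, ha, rfl⟩, hp⟩
        exact ⟨a, ⟨ha, h a ha hp⟩, rfl⟩
    _ ≤ {a | a ∈ s ∧ q a}.encard := encard_image_le _ _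

section Thickening

variable {X : Type*} [MetricSpace X] {d : ℝ} {m : ℕ} {𝔙 : Set (Set X)}

theorem UnifBounded.image_thickening (h : UnifBounded 𝔙) :
    UnifBounded (thickening d '' 𝔙) := by
  obtain ⟨R, hR⟩ := h
  refine ⟨d + R + d, ?_⟩
  rintro _ ⟨V, hV, rfl⟩ x hx y hy
  obtain ⟨vx, hvx, hxvx⟩ := mem_thickening_iff.1 hx
  obtain ⟨vy, hvy, hyvy⟩ := mem_thickening_iff.1 hy
  calc dist x y ≤ dist x vx + dist vx vy + dist vy y := dist_triangle4 x vx vy y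
    _ ≤ d + R + d := by
        rw [dist_comm vy y]
        linarith [hR V hV vx hvx vy hvy]

theorem IsCover.image_thickening (h : IsCover 𝔙) (hd : 0 < d) :
    IsCover (thickening d '' 𝔙) := fun x ↦
  let ⟨V, hV, hx⟩ := h x
  ⟨thickening d V, mem_image_of_mem _ hV, self_subset_thickening hd V hx⟩

theorem IsCover.lebesgueGT_image_thickening (h : IsCover 𝔙) :
    LebesgueGT d (thickening d '' 𝔙) := fun x ↦
  let ⟨V, hV, hx⟩ := h x
  ⟨thickening d V, mem_image_of_mem _ hV, ball_subset_thickening hx d⟩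

theorem DMultLE.multLE_image_thickening (h : DMultLE d m 𝔙) :
    MultLE m (thickening d '' 𝔙) := fun x ↦ by
  refine (encard_sep_image_le fun V _ hx ↦ ?_).trans (h x)
  obtain ⟨v, hv, hxv⟩ := mem_thickening_iff.1 hx
  exact ⟨v, hv, mem_ball_comm.1 hxv⟩

end Thickening

section Shrinking

variable {X : Type*} [MetricSpace X] {d : ℝ} {m : ℕ} {𝔘 : Set (Set X)}

theorem shrinking_subset (hd : 0 < d) (U : Set X) : shrinking d U ⊆ U :=
  fun _ hy ↦ hy (mem_ball_self hd)

theorem UnifBounded.image_shrinking (h : UnifBounded 𝔘) (hd : 0 < d) :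
    UnifBounded (shrinking d '' 𝔘) := by
  obtain ⟨R, hR⟩ := h
  refine ⟨R, ?_⟩
  rintro _ ⟨U, hU, rfl⟩ x hx y hy
  exact hR U hU x (shrinking_subset hd U hx) y (shrinking_subset hd U hy)

theorem LebesgueGT.isCover_image_shrinking (h : LebesgueGT d 𝔘) :
    IsCover (shrinking d '' 𝔘) := fun x ↦
  let ⟨U, hU, hx⟩ := h x
  ⟨shrinking d U, mem_image_of_mem _ hU, hx⟩

theorem MultLE.dMultLE_image_shrinking (h : MultLE m 𝔘) :
    DMultLE d m (shrinking d '' 𝔘) := fun x ↦ by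
  refine (encard_sep_image_le fun U _ ⟨y, hy, hxy⟩ ↦ ?_).trans (h x)
  exact hy (mem_ball_comm.1 hxy)

end Shrinking

/-- For a metric space `X`, the following are equivalent: (1) for every `d > 0` there is a
uniformly bounded cover of `X` with `d`-multiplicity at most `n+1`; (2) for every `d > 0`
there is a uniformly bounded cover of `X` with multiplicity at most `n+1` and Lebesgue
number greater than `d`. -/
theorem dmultiplicity_iff_multiplicity_and_lebesgue (X : Type*) [MetricSpace X] (n : ℕ) :
    (∀ d : ℝ, 0 < d → ∃ 𝔙 : Set (Set X),
        UnifBounded 𝔙 ∧ IsCover 𝔙 ∧ DMultLE d (n + 1) 𝔙) ↔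
    (∀ d : ℝ, 0 < d → ∃ 𝔘 : Set (Set X),
        UnifBounded 𝔘 ∧ IsCover 𝔘 ∧ MultLE (n + 1) 𝔘 ∧ LebesgueGT d 𝔘) := by
  constructor
  · intro h d hd
    obtain ⟨𝔙, hbdd, hcov, hmult⟩ := h d hd
    exact ⟨thickening d '' 𝔙, hbdd.image_thickening, hcov.image_thickening hd,
      hmult.multLE_image_thickening, hcov.lebesgueGT_image_thickening⟩
  · intro h d hd
    obtain ⟨𝔘, hbdd, -, hmult, hleb⟩ := h d hd
    exact ⟨shrinking d '' 𝔘, hbdd.image_shrinking hd, hleb.isCover_image_shrinking,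
      hmult.dMultLE_image_shrinking⟩
end

section
/- Let X = ∪_α F_α be a metric space with asdim F_α ≤ n uniformly, and suppose for every r > 0 there exists a subset Y_r ⊂ X with asdim Y_r ≤ n such that the family {F_α \ Y_r} is r-disjoint. Then asdim X ≤ n. -/
open Metric Set

/-- `asdim X ≤ n`: for every `d > 0` there exist `n+1` uniformly bounded `d`-disjoint
families of subsets of `X` whose union covers `X`. -/
def ASDimLE (X : Type*) [MetricSpace X] (n : ℕ) : Prop :=
  ∀ d : ℝ, 0 < d → ∃ 𝔘 : Fin (n + 1) → Set (Set X),
    (∀ i, UnifBounded (𝔘 i) ∧ DDisjoint d (𝔘 i)) ∧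
    ∀ x : X, ∃ i, ∃ U ∈ 𝔘 i, x ∈ U

/-!
Fix `d > 0` and let `R` bound the uniform covers of the `F α` at scale `d`. For `Y = Y_d` the
sets `F α \ Y` are `d`-separated, so, taking one cover per distinct set, the pieces `U \ Y`
form `n + 1` families `𝔚 i` of `R`-bounded, `d`-disjoint sets covering `X \ Y`. Cover `Y` by
`n + 1` uniformly bounded, `(2d + R)`-disjoint families `𝒱 i`. In colour `i`, let every
`V ∈ 𝒱 i` absorb the members of `𝔚 i` that come `d`-close to it: an `R`-bounded set is
`d`-close to at most one member of a `(2d + R)`-disjoint family, so the absorbed sets stay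
`d`-apart, the result is uniformly bounded, and together the colours cover `X`.
-/

section

variable {X : Type*} [MetricSpace X]

def UnifBoundedBy (R : ℝ) (𝔘 : Set (Set X)) : Prop :=
  ∀ U ∈ 𝔘, ∀ x ∈ U, ∀ y ∈ U, dist x y ≤ R

theorem UnifBoundedBy.mono {R R' : ℝ} {𝔘 : Set (Set X)} (h : UnifBoundedBy R 𝔘)
    (hR : R ≤ R') : UnifBoundedBy R' 𝔘 :=
  fun U hU x hx y hy => (h U hU x hx y hy).trans hR

section Images

variable {Y : Type*} [MetricSpace Y] {f : Y → X} {d : ℝ} {𝔘 : Set (Set Y)}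

theorem UnifBounded.image_image (hf : Isometry f) (h : UnifBounded 𝔘) :
    UnifBounded ((f '' ·) '' 𝔘) := by
  obtain ⟨R, hR⟩ := h
  refine ⟨R, ?_⟩
  rintro _ ⟨U, hU, rfl⟩ _ ⟨x, hx, rfl⟩ _ ⟨y, hy, rfl⟩
  rw [hf.dist_eq]
  exact hR U hU x hx y hy

theorem DDisjoint.image_image (hf : Isometry f) (h : DDisjoint d 𝔘) :
    DDisjoint d ((f '' ·) '' 𝔘) := by
  rintro _ ⟨U, hU, rfl⟩ _ ⟨V, hV, rfl⟩ hne _ ⟨x, hx, rfl⟩ _ ⟨y, hy, rfl⟩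
  rw [hf.dist_eq]
  exact h U hU V hV (ne_of_apply_ne _ hne) x hx y hy

end Images

theorem ASDimLE.exists_cover_of_subtype {Y : Set X} {n : ℕ} (h : ASDimLE Y n) {d : ℝ}
    (hd : 0 < d) : ∃ 𝒱 : Fin (n + 1) → Set (Set X),
      (∀ i, UnifBounded (𝒱 i) ∧ DDisjoint d (𝒱 i)) ∧ ∀ y ∈ Y, ∃ i, ∃ V ∈ 𝒱 i, y ∈ V := by
  obtain ⟨𝒱, h𝒱, h𝒱cov⟩ := h d hd
  refine ⟨fun i => (Subtype.val '' ·) '' 𝒱 i, fun i => ⟨(h𝒱 i).1.image_image isometry_subtype_coe,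
    (h𝒱 i).2.image_image isometry_subtype_coe⟩, fun y hy => ?_⟩
  obtain ⟨i, V, hV, hyV⟩ := h𝒱cov ⟨y, hy⟩
  exact ⟨i, _, mem_image_of_mem _ hV, ⟨y, hy⟩, hyV, rfl⟩

section Unions

variable {ι κ : Type*} {d R : ℝ}

theorem DDisjoint.image_diff {𝔘 : Set (Set X)} (h : DDisjoint d 𝔘) (Y : Set X) :
    DDisjoint d ((· \ Y) '' 𝔘) := by
  rintro _ ⟨U, hU, rfl⟩ _ ⟨V, hV, rfl⟩ hne x hx y hy
  exact h U hU V hV (ne_of_apply_ne (· \ Y) hne) x hx.1 y hy.1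

theorem DDisjoint.iUnion {S : κ → Set X} (hS : DDisjoint d (range S)) (hinj : S.Injective)
    {𝔘 : κ → Set (Set X)} (hsub : ∀ k, ∀ U ∈ 𝔘 k, U ⊆ S k) (h𝔘 : ∀ k, DDisjoint d (𝔘 k)) :
    DDisjoint d (⋃ k, 𝔘 k) := by
  simp only [DDisjoint, mem_iUnion]
  rintro U ⟨k, hU⟩ V ⟨l, hV⟩ hne x hx y hy
  obtain rfl | hkl := eq_or_ne k l
  · exact h𝔘 k U hU V hV hne x hx y hy
  · exact hS _ (mem_range_self k) _ (mem_range_self l) (hinj.ne hkl) x (hsub k U hU hx)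
      y (hsub l V hV hy)

theorem exists_cover_iUnion_of_dDisjoint (A : ι → Set X) (hA : DDisjoint d (range A))
    (𝔘 : ι → κ → Set (Set X)) (hsub : ∀ α i, ∀ U ∈ 𝔘 α i, U ⊆ A α)
    (hbdd : ∀ α i, UnifBoundedBy R (𝔘 α i)) (hdisj : ∀ α i, DDisjoint d (𝔘 α i))
    (hcov : ∀ α, ∀ x ∈ A α, ∃ i, ∃ U ∈ 𝔘 α i, x ∈ U) :
    ∃ 𝔚 : κ → Set (Set X), (∀ i, UnifBoundedBy R (𝔚 i) ∧ DDisjoint d (𝔚 i)) ∧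
      ∀ α, ∀ x ∈ A α, ∃ i, ∃ W ∈ 𝔚 i, x ∈ W := by
  -- indices `α` with equal sets `A α` must share one family, so families are chosen per set
  choose rep hrep using fun S : range A => S.2
  refine ⟨fun i => ⋃ S, 𝔘 (rep S) i, fun i => ⟨?_, ?_⟩, fun α x hx => ?_⟩
  · simp only [UnifBoundedBy, mem_iUnion]
    rintro U ⟨S, hU⟩
    exact hbdd _ i U hU
  · refine DDisjoint.iUnion (S := Subtype.val) (by rwa [Subtype.range_coe]) Subtype.val_injective
      (fun S U hU => hrep S ▸ hsub _ i U hU) (fun S => hdisj _ i)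
  · obtain ⟨i, U, hU, hxU⟩ := hcov (rep ⟨A α, α, rfl⟩) x (by rwa [hrep])
    exact ⟨i, U, mem_iUnion.2 ⟨_, hU⟩, hxU⟩

theorem exists_cover_iUnion_diff {F : ι → Set X} {Y : Set X}
    (hF : ∀ α, ∃ 𝔘 : κ → Set (Set X),
      (∀ i, ∀ U ∈ 𝔘 i, U ⊆ F α ∧ ∀ x ∈ U, ∀ y ∈ U, dist x y ≤ R) ∧
      (∀ i, DDisjoint d (𝔘 i)) ∧ ∀ x ∈ F α, ∃ i, ∃ U ∈ 𝔘 i, x ∈ U)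
    (hY : DDisjoint d (range fun α => F α \ Y)) :
    ∃ 𝔚 : κ → Set (Set X), (∀ i, UnifBoundedBy R (𝔚 i) ∧ DDisjoint d (𝔚 i)) ∧
      ∀ x ∈ (⋃ α, F α) \ Y, ∃ i, ∃ W ∈ 𝔚 i, x ∈ W := by
  choose 𝔘 h𝔘 hdisj hcov using hF
  obtain ⟨𝔚, h𝔚, h𝔚cov⟩ := exists_cover_iUnion_of_dDisjoint _ hY (fun α i => (· \ Y) '' 𝔘 α i)
    (by rintro α i _ ⟨U, hU, rfl⟩; exact sdiff_subset_sdiff_left (h𝔘 α i U hU).1)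
    (by rintro α i _ ⟨U, hU, rfl⟩ x hx y hy; exact (h𝔘 α i U hU).2 x hx.1 y hy.1)
    (fun α i => (hdisj α i).image_diff Y)
    (by
      rintro α x ⟨hxF, hxY⟩
      obtain ⟨i, U, hU, hxU⟩ := hcov α x hxF
      exact ⟨i, U \ Y, mem_image_of_mem _ hU, hxU, hxY⟩)
  refine ⟨𝔚, h𝔚, fun x ⟨hx, hxY⟩ => ?_⟩
  obtain ⟨α, hα⟩ := mem_iUnion.1 hx
  exact h𝔚cov α x ⟨hα, hxY⟩

end Unions

section Saturation

variable {d R s : ℝ} {𝒱 𝔚 : Set (Set X)} {V V' W : Set X} {x y : X}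

def saturation (d : ℝ) (𝔚 : Set (Set X)) (V : Set X) : Set X :=
  V ∪ ⋃₀ {W ∈ 𝔚 | ¬Disjoint W (thickening d V)}

def saturatedUnion (d : ℝ) (𝒱 𝔚 : Set (Set X)) : Set (Set X) :=
  saturation d 𝔚 '' 𝒱 ∪ {W ∈ 𝔚 | ∀ V ∈ 𝒱, Disjoint W (thickening d V)}

theorem not_disjoint_thickening_iff :
    ¬Disjoint W (thickening d V) ↔ ∃ w ∈ W, ∃ v ∈ V, dist w v < d := by
  simp only [not_disjoint_iff, mem_thickening_iff]

theorem eq_of_not_disjoint_thickening (h𝒱 : DDisjoint s 𝒱) (hs : 2 * d + R ≤ s)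
    (hW : ∀ x ∈ W, ∀ y ∈ W, dist x y ≤ R) (hV : V ∈ 𝒱) (hV' : V' ∈ 𝒱)
    (h : ¬Disjoint W (thickening d V)) (h' : ¬Disjoint W (thickening d V')) : V = V' := by
  obtain ⟨x, hx, v, hv, hxv⟩ := not_disjoint_thickening_iff.1 h
  obtain ⟨x', hx', v', hv', hxv'⟩ := not_disjoint_thickening_iff.1 h'
  by_contra hne
  have := h𝒱 V hV V' hV' hne v hv v' hv'
  have := hW x hx x' hx'
  linarith [dist_triangle4 v x x' v', dist_comm v x]

theorem exists_dist_le_of_mem_saturation (h𝔚 : UnifBoundedBy R 𝔚) (hR : 0 ≤ R) (hd : 0 ≤ d)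
    (hx : x ∈ saturation d 𝔚 V) : ∃ v ∈ V, dist x v ≤ R + d := by
  obtain hx | ⟨W, ⟨hW, hWV⟩, hxW⟩ := hx
  · exact ⟨x, hx, by rw [dist_self]; positivity⟩
  · obtain ⟨w, hw, v, hv, hwv⟩ := not_disjoint_thickening_iff.1 hWV
    exact ⟨v, hv, by linarith [dist_triangle x w v, h𝔚 W hW x hxW w hw]⟩

theorem UnifBounded.saturatedUnion (h𝒱 : UnifBounded 𝒱) (h𝔚 : UnifBoundedBy R 𝔚) (hR : 0 ≤ R)
    (hd : 0 ≤ d) : UnifBounded (saturatedUnion d 𝒱 𝔚) := by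
  obtain ⟨R', hR'⟩ := h𝒱
  refine ⟨max (R' + 2 * (R + d)) R, ?_⟩
  rintro _ (⟨V, hV, rfl⟩ | ⟨hW, -⟩) x hx y hy
  · obtain ⟨v, hv, hxv⟩ := exists_dist_le_of_mem_saturation h𝔚 hR hd hx
    obtain ⟨w, hw, hyw⟩ := exists_dist_le_of_mem_saturation h𝔚 hR hd hy
    calc dist x y ≤ dist x v + dist v w + dist y w := by
          linarith [dist_triangle4 x v w y, dist_comm w y]
      _ ≤ R' + 2 * (R + d) := by linarith [hR' V hV v hv w hw]
      _ ≤ _ := le_max_left _ _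
  · exact (h𝔚 _ hW x hx y hy).trans (le_max_right _ _)

theorem not_disjoint_thickening_of_mem_saturation (h𝔚 : DDisjoint d 𝔚) (hW : W ∈ 𝔚)
    (hx : x ∈ saturation d 𝔚 V) (hy : y ∈ W) (hxy : dist x y < d) :
    ¬Disjoint W (thickening d V) := by
  obtain hx | ⟨W', ⟨hW', hW'V⟩, hxW'⟩ := hx
  · exact not_disjoint_thickening_iff.2 ⟨y, hy, x, hx, by rwa [dist_comm]⟩
  · obtain rfl : W' = W := by
      by_contra hne
      exact (h𝔚 W' hW' W hW hne x hxW' y hy).not_gt hxy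
    exact hW'V

theorem eq_of_mem_saturatedUnion_of_dist_lt (h𝒱 : DDisjoint s 𝒱) (h𝔚 : DDisjoint d 𝔚)
    (h𝔚b : UnifBoundedBy R 𝔚) (hR : 0 ≤ R) (hd : 0 ≤ d) (hs : 2 * d + R ≤ s)
    {A B : Set X} (hA : A ∈ saturatedUnion d 𝒱 𝔚) (hB : B ∈ saturatedUnion d 𝒱 𝔚)
    (hx : x ∈ A) (hy : y ∈ B) (hxy : dist x y < d) : A = B := by
  have huniq : ∀ {W V V'}, W ∈ 𝔚 → V ∈ 𝒱 → V' ∈ 𝒱 → ¬Disjoint W (thickening d V) →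
      ¬Disjoint W (thickening d V') → V = V' := fun hW =>
    eq_of_not_disjoint_thickening h𝒱 hs (h𝔚b _ hW)
  rcases hA with ⟨V, hV, rfl⟩ | ⟨hA, hAfar⟩ <;> rcases hB with ⟨V', hV', rfl⟩ | ⟨hB, hBfar⟩
  · congr
    rcases hy with hy | ⟨W, ⟨hW, hWV'⟩, hyW⟩
    · rcases hx with hx | ⟨W, ⟨hW, hWV⟩, hxW⟩
      · by_contra hne
        linarith [h𝒱 V hV V' hV' hne x hx y hy]
      · refine huniq hW hV hV' hWV (not_disjoint_thickening_of_mem_saturation h𝔚 hW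
          (subset_union_left hy) hxW ?_)
        rwa [dist_comm]
    · exact huniq hW hV hV' (not_disjoint_thickening_of_mem_saturation h𝔚 hW hx hyW hxy) hWV'
  · exact (not_disjoint_thickening_of_mem_saturation h𝔚 hB hx hy hxy (hBfar V hV)).elim
  · refine (not_disjoint_thickening_of_mem_saturation h𝔚 hA hy hx ?_ (hAfar V' hV')).elim
    rwa [dist_comm]
  · by_contra hne
    linarith [h𝔚 A hA B hB hne x hx y hy]

theorem DDisjoint.saturatedUnion (h𝒱 : DDisjoint s 𝒱) (h𝔚 : DDisjoint d 𝔚)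
    (h𝔚b : UnifBoundedBy R 𝔚) (hR : 0 ≤ R) (hd : 0 ≤ d) (hs : 2 * d + R ≤ s) :
    DDisjoint d (saturatedUnion d 𝒱 𝔚) := fun _ hA _ hB hne _ hx _ hy =>
  le_of_not_gt fun hxy =>
    hne (eq_of_mem_saturatedUnion_of_dist_lt h𝒱 h𝔚 h𝔚b hR hd hs hA hB hx hy hxy)

theorem subset_sUnion_saturatedUnion : ⋃₀ 𝒱 ∪ ⋃₀ 𝔚 ⊆ ⋃₀ saturatedUnion d 𝒱 𝔚 := by
  rintro x (⟨V, hV, hxV⟩ | ⟨W, hW, hxW⟩)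
  · exact ⟨_, Or.inl (mem_image_of_mem _ hV), Or.inl hxV⟩
  · by_cases hfar : ∀ V ∈ 𝒱, Disjoint W (thickening d V)
    · exact ⟨W, Or.inr ⟨hW, hfar⟩, hxW⟩
    · obtain ⟨V, hV, hWV⟩ := not_forall₂.1 hfar
      exact ⟨_, Or.inl (mem_image_of_mem _ hV), Or.inr ⟨W, ⟨hW, hWV⟩, hxW⟩⟩

end Saturation

end

/-- Infinite Union Theorem: let `X = ⋃ F α` with `asdim F α ≤ n` uniformly (for every
`d > 0` there is a common bound `R` and, for each `α`, `n+1` families of `R`-bounded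
`d`-disjoint subsets of `F α` covering `F α`). Suppose for every `r > 0` there is
`Y_r ⊆ X` with `asdim Y_r ≤ n` such that the family `{F α \ Y_r}` is `r`-disjoint.
Then `asdim X ≤ n`. -/
theorem asdim_infinite_union (X : Type*) [MetricSpace X] {ι : Type*} (F : ι → Set X)
    (n : ℕ) (hcov : (⋃ α, F α) = Set.univ)
    (hunif : ∀ d : ℝ, 0 < d → ∃ R : ℝ, ∀ α : ι, ∃ 𝔘 : Fin (n + 1) → Set (Set X),
      (∀ i, ∀ U ∈ 𝔘 i, U ⊆ F α ∧ ∀ x ∈ U, ∀ y ∈ U, dist x y ≤ R) ∧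
      (∀ i, DDisjoint d (𝔘 i)) ∧
      ∀ x ∈ F α, ∃ i, ∃ U ∈ 𝔘 i, x ∈ U)
    (hY : ∀ r : ℝ, 0 < r → ∃ Y : Set X, ASDimLE Y n ∧
      ∀ α β : ι, F α \ Y ≠ F β \ Y →
        ∀ x ∈ F α \ Y, ∀ y ∈ F β \ Y, r ≤ dist x y) :
    ASDimLE X n := by
  intro d hd
  obtain ⟨R₀, hR₀⟩ := hunif d hd
  set R := max R₀ 0
  obtain ⟨Y, hYdim, hYsep⟩ := hY d hd
  obtain ⟨𝔚, h𝔚, h𝔚cov⟩ := exists_cover_iUnion_diff hR₀ (by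
    rintro _ ⟨α, rfl⟩ _ ⟨β, rfl⟩
    exact hYsep α β)
  obtain ⟨𝒱, h𝒱, h𝒱cov⟩ := hYdim.exists_cover_of_subtype (d := 2 * d + R) (by positivity)
  have hR : 0 ≤ R := le_max_right _ _
  have h𝔚R : ∀ i, UnifBoundedBy R (𝔚 i) := fun i => (h𝔚 i).1.mono (le_max_left _ _)
  refine ⟨fun i => saturatedUnion d (𝒱 i) (𝔚 i), fun i => ⟨?_, ?_⟩, fun x => ?_⟩
  · exact (h𝒱 i).1.saturatedUnion (h𝔚R i) hR hd.le
  · exact (h𝒱 i).2.saturatedUnion (h𝔚 i).2 (h𝔚R i) hR hd.le le_rfl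
  obtain ⟨i, hx⟩ : ∃ i, x ∈ ⋃₀ 𝒱 i ∪ ⋃₀ 𝔚 i := by
    by_cases hxY : x ∈ Y
    · obtain ⟨i, V, hV, hxV⟩ := h𝒱cov x hxY
      exact ⟨i, Or.inl ⟨V, hV, hxV⟩⟩
    · obtain ⟨i, W, hW, hxW⟩ := h𝔚cov x ⟨hcov ▸ mem_univ x, hxY⟩
      exact ⟨i, Or.inr ⟨W, hW, hxW⟩⟩
  obtain ⟨U, hU, hxU⟩ := subset_sUnion_saturatedUnion hx
  exact ⟨i, U, hU, hxU⟩
end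

section
/- For every n there is a constant c_n such that for every simplicial map g : X → Y from an oriented n-dimensional simplicial complex X, the quotient map q : X × [0,1] → M_g from the product (X with the uniform metric, product metric on X × [0,1]) onto the mapping cylinder M_g with its uniform metric is c_n-Lipschitz. -/
open Set

/-- An abstract simplicial complex on the vertex set `V`. -/
structure AbsSC (V : Type*) where
  faces : Set (Finset V)
  down_closed : ∀ σ ∈ faces, ∀ τ ⊆ σ, τ ∈ faces

/-- `g` is a simplicial map from `K` to `L`. -/
def IsSimplicialMap {V W : Type*} [DecidableEq W] (K : AbsSC V) (L : AbsSC W)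
    (g : V → W) : Prop :=
  ∀ σ ∈ K.faces, σ.image g ∈ L.faces

/-- The triangulation of the prism `|K| × [0,1]` determined by an orientation (linear
order) on the vertices of `K`: its simplices are the chains in the product order on
`V × Fin 2` projecting to simplices of `K`. -/
def PrismFaces {V : Type*} [LinearOrder V] (K : AbsSC V) : Set (Finset (V × Fin 2)) :=
  {τ | τ.image Prod.fst ∈ K.faces ∧ IsChain (· ≤ ·) (τ : Set (V × Fin 2))}

/-- `b` is a point of the realization of the triangulated prism, in barycentric
coordinates. -/
def InPrism {V : Type*} [LinearOrder V] (K : AbsSC V) (b : V × Fin 2 → ℝ) : Prop :=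
  (∀ p, 0 ≤ b p) ∧ ∃ τ ∈ PrismFaces K, (∀ p, b p ≠ 0 → p ∈ τ) ∧ ∑ p ∈ τ, b p = 1

/-- The quotient map from the triangulated prism onto the mapping cylinder `M_g`
(vertex set `V ⊕ W`), in barycentric coordinates: the bottom copy `(v,0)` goes to the
vertex `inl v` of `X` and the top copy `(v,1)` goes to the vertex `inr (g v)` of `Y`. -/
noncomputable def cylProj {V W : Type*} (g : V → W) (b : V × Fin 2 → ℝ) :
    V ⊕ W → ℝ :=
  fun z => match z with
  | Sum.inl v => b (v, 0)
  | Sum.inr w => ∑' v : {v : V // g v = w}, b ((v : V), 1)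


/-!
A point `b` of the triangulated prism is supported on a chain of `V × Fin 2`, so every bottom
vertex `(u, 0)` of its support lies below every top vertex `(v, 1)`. Hence, for an up-set `P`
of vertices, either `b` has no top mass outside `P` or no bottom mass inside `P`, and the top
coordinates are recovered from the point `x = b(·,0) + b(·,1)` of `|X|` and the height
`t = ∑ b(·,1)` as `b(v,1) = min t (∑_{u ≥ v} x u) - min t (∑_{u > v} x u)`.
This is Lipschitz in `(x, t)` with a constant controlled by the number `≤ 2n + 2` of vertices
carrying the two points; the bottom coordinates are `x - b(·,1)` and the coordinates in `Y`
are fibre sums of top coordinates, so they are controlled as well.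
-/

open Finset

lemma sum_sq_sum_fiberwise_le {ι κ : Type*} [DecidableEq κ] (F : Finset ι) (g : ι → κ)
    (f : ι → ℝ) :
    ∑ w ∈ F.image g, (∑ v ∈ F with g v = w, f v) ^ 2 ≤ #F * ∑ v ∈ F, f v ^ 2 := by
  calc ∑ w ∈ F.image g, (∑ v ∈ F with g v = w, f v) ^ 2
      ≤ ∑ w ∈ F.image g, #F * ∑ v ∈ F with g v = w, f v ^ 2 := by
        refine sum_le_sum fun w _ => sq_sum_le_card_mul_sum_sq.trans ?_
        gcongr
        exact filter_subset _ _
    _ = #F * ∑ v ∈ F, f v ^ 2 := by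
        rw [← mul_sum, sum_fiberwise_of_maps_to fun _ => mem_image_of_mem g]

lemma sum_sq_bottom_sub_bottom_le {V : Type*} (F : Finset V) (b b' : V × Fin 2 → ℝ) :
    ∑ v ∈ F, (b (v, 0) - b' (v, 0)) ^ 2 ≤
      2 * (∑ v ∈ F, (b (v, 0) + b (v, 1) - (b' (v, 0) + b' (v, 1))) ^ 2 +
        ∑ v ∈ F, (b (v, 1) - b' (v, 1)) ^ 2) := by
  rw [← sum_add_distrib, mul_sum]
  exact sum_le_sum fun v _ => by
    linarith [sq_nonneg (b (v, 0) + 2 * b (v, 1) - (b' (v, 0) + 2 * b' (v, 1)))]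

lemma abs_sum_filter_sub_sum_filter_le {ι : Type*} (F : Finset ι) (P : ι → Prop)
    [DecidablePred P] (f f' : ι → ℝ) :
    |∑ u ∈ F with P u, f u - ∑ u ∈ F with P u, f' u| ≤ ∑ u ∈ F, |f u - f' u| := by
  rw [← sum_sub_distrib]
  exact (abs_sum_le_sum_abs _ _).trans
    (sum_le_sum_of_subset_of_nonneg (filter_subset _ _) fun _ _ _ => abs_nonneg _)

lemma abs_min_sub_min_le_add (a b c d : ℝ) : |min a b - min c d| ≤ |a - c| + |b - d| :=
  (abs_min_sub_min_le_max a b c d).trans (max_le_add_of_nonneg (abs_nonneg _) (abs_nonneg _))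

section Chain

variable {V : Type*} [LinearOrder V] {b b' : V × Fin 2 → ℝ}

lemma fst_le_of_isChain_support (hb : IsChain (· ≤ ·) (Function.support b)) {u v : V}
    (hu : b (u, 0) ≠ 0) (hv : b (v, 1) ≠ 0) : u ≤ v := by
  rcases hb hu hv (by simp [Prod.ext_iff]) with h | h
  · exact h.1
  · exact absurd h.2 (by decide : ¬(1 : Fin 2) ≤ 0)

lemma top_eq_zero_or_bottom_eq_zero (hb : IsChain (· ≤ ·) (Function.support b))
    {P : V → Prop} (hP : Monotone P) :
    (∀ u, ¬P u → b (u, 1) = 0) ∨ ∀ u, P u → b (u, 0) = 0 := by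
  by_contra! h
  obtain ⟨⟨u, hu, hbu⟩, v, hv, hbv⟩ := h
  exact hu (hP (fst_le_of_isChain_support hb hbv hbu) hv)

lemma min_sum_top_sum_filter_eq (hb0 : 0 ≤ b) (hb : IsChain (· ≤ ·) (Function.support b))
    (F : Finset V) {P : V → Prop} [DecidablePred P] (hP : Monotone P) :
    min (∑ u ∈ F, b (u, 1)) (∑ u ∈ F with P u, (b (u, 0) + b (u, 1))) =
      ∑ u ∈ F with P u, b (u, 1) := by
  rw [sum_add_distrib]
  rcases top_eq_zero_or_bottom_eq_zero hb hP with h | h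
  · rw [sum_filter_of_ne fun u _ hu => not_not.1 (mt (h u) hu)]
    exact min_eq_left (le_add_of_nonneg_left (sum_nonneg fun _ _ => hb0 _))
  · rw [sum_eq_zero fun u hu => h u (mem_filter.1 hu).2, zero_add]
    exact min_eq_right (sum_le_sum_of_subset_of_nonneg (filter_subset _ _) fun _ _ _ => hb0 _)

lemma sum_filter_le_eq_add_sum_filter_lt {M : Type*} [AddCommMonoid M] {F : Finset V} {v : V}
    (hv : v ∈ F) (f : V → M) :
    ∑ u ∈ F with v ≤ u, f u = f v + ∑ u ∈ F with v < u, f u := by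
  have : {u ∈ F | v ≤ u} = insert v {u ∈ F | v < u} := by
    ext u
    rw [Finset.mem_insert, mem_filter, mem_filter, le_iff_eq_or_lt]
    constructor
    · rintro ⟨hu, rfl | h⟩ <;> tauto
    · rintro (rfl | ⟨hu, h⟩) <;> tauto
  rw [this, sum_insert (by simp)]

lemma top_eq_min_sub_min (hb0 : 0 ≤ b) (hb : IsChain (· ≤ ·) (Function.support b))
    {F : Finset V} {v : V} (hv : v ∈ F) :
    b (v, 1) = min (∑ u ∈ F, b (u, 1)) (∑ u ∈ F with v ≤ u, (b (u, 0) + b (u, 1))) -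
      min (∑ u ∈ F, b (u, 1)) (∑ u ∈ F with v < u, (b (u, 0) + b (u, 1))) := by
  rw [min_sum_top_sum_filter_eq hb0 hb F monotone_le, min_sum_top_sum_filter_eq hb0 hb F
    monotone_lt, sum_filter_le_eq_add_sum_filter_lt hv, add_sub_cancel_right]

lemma abs_top_sub_top_le (hb0 : 0 ≤ b) (hb : IsChain (· ≤ ·) (Function.support b))
    (hb'0 : 0 ≤ b') (hb' : IsChain (· ≤ ·) (Function.support b')) {F : Finset V} {v : V}
    (hv : v ∈ F) :
    |b (v, 1) - b' (v, 1)| ≤ 2 * |∑ u ∈ F, b (u, 1) - ∑ u ∈ F, b' (u, 1)| +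
      2 * ∑ u ∈ F, |b (u, 0) + b (u, 1) - (b' (u, 0) + b' (u, 1))| := by
  rw [top_eq_min_sub_min hb0 hb hv, top_eq_min_sub_min hb'0 hb' hv, sub_sub_sub_comm]
  set x := fun u => b (u, 0) + b (u, 1)
  set x' := fun u => b' (u, 0) + b' (u, 1)
  set t := ∑ u ∈ F, b (u, 1)
  set t' := ∑ u ∈ F, b' (u, 1)
  refine (abs_sub _ _).trans ?_
  linarith [abs_min_sub_min_le_add t (∑ u ∈ F with v ≤ u, x u) t' (∑ u ∈ F with v ≤ u, x' u),
    abs_min_sub_min_le_add t (∑ u ∈ F with v < u, x u) t' (∑ u ∈ F with v < u, x' u),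
    abs_sum_filter_sub_sum_filter_le F (v ≤ ·) x x',
    abs_sum_filter_sub_sum_filter_le F (v < ·) x x']

lemma sum_sq_top_sub_top_le (hb0 : 0 ≤ b) (hb : IsChain (· ≤ ·) (Function.support b))
    (hb'0 : 0 ≤ b') (hb' : IsChain (· ≤ ·) (Function.support b')) (F : Finset V) :
    ∑ v ∈ F, (b (v, 1) - b' (v, 1)) ^ 2 ≤
      #F * (8 * (∑ u ∈ F, b (u, 1) - ∑ u ∈ F, b' (u, 1)) ^ 2 +
        8 * #F * ∑ u ∈ F, (b (u, 0) + b (u, 1) - (b' (u, 0) + b' (u, 1))) ^ 2) := by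
  set T := ∑ u ∈ F, b (u, 1) - ∑ u ∈ F, b' (u, 1)
  set A := ∑ u ∈ F, |b (u, 0) + b (u, 1) - (b' (u, 0) + b' (u, 1))|
  have hA : A ^ 2 ≤ #F * ∑ u ∈ F, (b (u, 0) + b (u, 1) - (b' (u, 0) + b' (u, 1))) ^ 2 := by
    simpa only [sq_abs] using sq_sum_le_card_mul_sum_sq (s := F)
      (f := fun u => |b (u, 0) + b (u, 1) - (b' (u, 0) + b' (u, 1))|)
  have hpt : ∀ v ∈ F, (b (v, 1) - b' (v, 1)) ^ 2 ≤ 8 * T ^ 2 + 8 * A ^ 2 := fun v hv => by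
    have h := abs_top_sub_top_le hb0 hb hb'0 hb' hv
    have hA0 : 0 ≤ A := sum_nonneg fun _ _ => abs_nonneg _
    rw [← sq_abs, ← sq_abs T]
    nlinarith [abs_nonneg (b (v, 1) - b' (v, 1)), abs_nonneg T, sq_nonneg (|T| - A)]
  calc ∑ v ∈ F, (b (v, 1) - b' (v, 1)) ^ 2 ≤ #F * (8 * T ^ 2 + 8 * A ^ 2) := by
        simpa only [sum_const, nsmul_eq_mul] using sum_le_sum hpt
    _ ≤ _ := mul_le_mul_of_nonneg_left (by linarith) (Nat.cast_nonneg _)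

lemma sum_sq_bottom_sub_add_sum_sq_fiberwise_le {W : Type*} [DecidableEq W] (g : V → W)
    (hb0 : 0 ≤ b) (hb : IsChain (· ≤ ·) (Function.support b))
    (hb'0 : 0 ≤ b') (hb' : IsChain (· ≤ ·) (Function.support b')) (F : Finset V) :
    ∑ v ∈ F, (b (v, 0) - b' (v, 0)) ^ 2 +
        ∑ w ∈ F.image g, (∑ v ∈ F with g v = w, (b (v, 1) - b' (v, 1))) ^ 2 ≤
      2 * ∑ u ∈ F, (b (u, 0) + b (u, 1) - (b' (u, 0) + b' (u, 1))) ^ 2 +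
        (2 + #F) * (#F * (8 * (∑ u ∈ F, b (u, 1) - ∑ u ∈ F, b' (u, 1)) ^ 2 +
          8 * #F * ∑ u ∈ F, (b (u, 0) + b (u, 1) - (b' (u, 0) + b' (u, 1))) ^ 2)) := by
  have hE := mul_le_mul_of_nonneg_left (sum_sq_top_sub_top_le hb0 hb hb'0 hb' F)
    (by positivity : (0 : ℝ) ≤ 2 + #F)
  linarith [sum_sq_bottom_sub_bottom_le F b b',
    sum_sq_sum_fiberwise_le F g fun v => b (v, 1) - b' (v, 1)]

end Chain

section CylinderCoordinates

variable {V W : Type*} [DecidableEq W] {g : V → W} {b b' : V × Fin 2 → ℝ} {F : Finset V}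

lemma apply_eq_zero_of_fst_notMem (hF : ∀ p ∈ Function.support b, p.1 ∈ F) {v : V}
    (hv : v ∉ F) (i : Fin 2) : b (v, i) = 0 :=
  by_contra fun h => hv (hF (v, i) h)

lemma cylProj_inr_eq_sum (hF : ∀ p ∈ Function.support b, p.1 ∈ F) (w : W) :
    cylProj g b (Sum.inr w) = ∑ v ∈ F with g v = w, b (v, 1) := by
  classical
  rw [cylProj, ← sum_subtype_eq_sum_filter]
  exact tsum_eq_sum fun v hv => apply_eq_zero_of_fst_notMem hF (fun h => hv (mem_subtype.2 h)) 1

lemma tsum_cylProj_sub_sq_eq (hF : ∀ p ∈ Function.support b, p.1 ∈ F)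
    (hF' : ∀ p ∈ Function.support b', p.1 ∈ F) :
    ∑' z, (cylProj g b z - cylProj g b' z) ^ 2 =
      ∑ v ∈ F, (b (v, 0) - b' (v, 0)) ^ 2 +
        ∑ w ∈ F.image g, (∑ v ∈ F with g v = w, (b (v, 1) - b' (v, 1))) ^ 2 := by
  rw [tsum_eq_sum (s := F.disjSum (F.image g)), sum_disjSum]
  · simp only [cylProj_inr_eq_sum hF, cylProj_inr_eq_sum hF', sum_sub_distrib]
    rfl
  · rintro (v | w) hz
    · simp [cylProj, apply_eq_zero_of_fst_notMem hF (by simpa using hz),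
        apply_eq_zero_of_fst_notMem hF' (by simpa using hz)]
    · have hw : ∀ v ∈ F, g v ≠ w := fun v hv hvw => hz (by simpa using ⟨v, hv, hvw⟩)
      simp [cylProj_inr_eq_sum hF, cylProj_inr_eq_sum hF', filter_false_of_mem hw]

end CylinderCoordinates

/-- For every `n` there is a constant `c_n` such that for every simplicial map
`g : X → Y` from an oriented `n`-dimensional simplicial complex `X`, the quotient map
`q : |X| × [0,1] → M_g` is `c_n`-Lipschitz, where `M_g` carries the uniform (`ℓ²`) metric
and `|X| × [0,1]` the product metric. In barycentric coordinates: for points `b, b'` of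
the triangulated prism, whose images in `|X| × [0,1]` have `X`-coordinates
`v ↦ b(v,0)+b(v,1)` and height `∑_v b(v,1)`, the squared `ℓ²`-distance of `q(b), q(b')`
is at most `c² ·` the squared product-metric distance. -/
theorem quotient_map_to_mapping_cylinder_lipschitz (n : ℕ) :
    ∃ c : ℝ, 0 ≤ c ∧
      ∀ (V W : Type) [LinearOrder V] [DecidableEq W]
        (K : AbsSC V) (L : AbsSC W) (g : V → W),
        (∀ σ ∈ K.faces, σ.card ≤ n + 1) →
        IsSimplicialMap K L g →
        ∀ b b' : V × Fin 2 → ℝ, InPrism K b → InPrism K b' →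
          ∑' z : V ⊕ W, (cylProj g b z - cylProj g b' z) ^ 2 ≤
            c ^ 2 *
              ((∑' v : V, ((b (v, 0) + b (v, 1)) - (b' (v, 0) + b' (v, 1))) ^ 2) +
                ((∑' v : V, b (v, 1)) - ∑' v : V, b' (v, 1)) ^ 2) := by
  refine ⟨8 * ((n : ℝ) + 2) ^ 2, by positivity, ?_⟩
  rintro V W _ _ K L g hdim - b b' ⟨hb0, τ, ⟨hτK, hτ⟩, hbτ, -⟩ ⟨hb'0, τ', ⟨hτ'K, hτ'⟩, hb'τ', -⟩
  set F := τ.image Prod.fst ∪ τ'.image Prod.fst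
  have hF : ∀ p ∈ Function.support b, p.1 ∈ F := fun p hp =>
    mem_union_left _ (mem_image_of_mem _ (hbτ p hp))
  have hF' : ∀ p ∈ Function.support b', p.1 ∈ F := fun p hp =>
    mem_union_right _ (mem_image_of_mem _ (hb'τ' p hp))
  have hcard : (#F : ℝ) ≤ 2 * n + 2 := by
    have := card_union_le (τ.image Prod.fst) (τ'.image Prod.fst)
    exact_mod_cast (by linarith [hdim _ hτK, hdim _ hτ'K] : #F ≤ 2 * n + 2)
  have hzero : ∀ v ∉ F, ∀ i, b (v, i) = 0 := fun _ => apply_eq_zero_of_fst_notMem hF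
  have hzero' : ∀ v ∉ F, ∀ i, b' (v, i) = 0 := fun _ => apply_eq_zero_of_fst_notMem hF'
  rw [tsum_cylProj_sub_sq_eq hF hF',
    tsum_eq_sum (s := F) fun v hv => by simp [hzero v hv, hzero' v hv],
    tsum_eq_sum (s := F) fun v hv => hzero v hv 1, tsum_eq_sum (s := F) fun v hv => hzero' v hv 1]
  refine (sum_sq_bottom_sub_add_sum_sq_fiberwise_le g hb0 (hτ.mono fun p hp => hbτ p hp) hb'0
    (hτ'.mono fun p hp => hb'τ' p hp) F).trans ?_
  set D := ∑ v ∈ F, (b (v, 0) + b (v, 1) - (b' (v, 0) + b' (v, 1))) ^ 2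
  set T := ∑ v ∈ F, b (v, 1) - ∑ v ∈ F, b' (v, 1)
  have hD : 0 ≤ D := sum_nonneg fun _ _ => sq_nonneg _
  have hcoefT : (8 * (2 * n + 4) * (2 * n + 2) : ℝ) ≤ (8 * (n + 2) ^ 2) ^ 2 := by nlinarith
  have hcoefD : (2 + 8 * (2 * n + 4) * (2 * n + 2) ^ 2 : ℝ) ≤ (8 * (n + 2) ^ 2) ^ 2 := by
    nlinarith
  calc _ ≤ 2 * D + (2 + (2 * n + 2)) * ((2 * n + 2) * (8 * T ^ 2 + 8 * (2 * n + 2) * D)) := by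
        gcongr
    _ ≤ (8 * ((n : ℝ) + 2) ^ 2) ^ 2 * (D + T ^ 2) := by
        nlinarith [mul_le_mul_of_nonneg_right hcoefT (sq_nonneg T),
          mul_le_mul_of_nonneg_right hcoefD hD]
end

section
/- Every tree (with its geodesic path metric) has asymptotic dimension at most 1; in particular, for a group Γ acting by isometries on a tree X with base point x₀, the orbit Γ·x₀ satisfies asdim(Γ·x₀) ≤ 1. -/
/-!
Root the tree at `x₀` and fix a scale `D ≥ d`. Cut it into the annuli
`A k = {v | k * D ≤ dist x₀ v < (k + 1) * D}` and split each annulus according to the ancestor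
of `v` at level `(k - 1) * D`; every piece has diameter at most `4 * D`. Since geodesics are
unique, the ancestor at level `m` is constant along any walk staying at height `≥ m`, so the
geodesic between two pieces of one annulus dips below level `(k - 1) * D` and they are
`2 * D + 2` apart. Annuli whose indices differ by at least `2` are more than `D` apart, so
colouring pieces by the parity of `k` yields two `d`-disjoint uniformly bounded families.
-/

open Set

/-- Asymptotic dimension `≤ n` of a set with a distance function `ρ`. -/
def ASDimLEdist {Z : Type*} (ρ : Z → Z → ℝ) (n : ℕ) : Prop :=
  ∀ d : ℝ, 0 < d → ∃ 𝔘 : Fin (n + 1) → Set (Set Z),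
    (∀ i, (∃ R : ℝ, ∀ U ∈ 𝔘 i, ∀ x ∈ U, ∀ y ∈ U, ρ x y ≤ R) ∧
      (∀ U ∈ 𝔘 i, ∀ V ∈ 𝔘 i, U ≠ V → ∀ x ∈ U, ∀ y ∈ V, d ≤ ρ x y)) ∧
    ∀ z : Z, ∃ i, ∃ U ∈ 𝔘 i, z ∈ U

namespace ASDimLEdist

variable {Z : Type*} {ρ : Z → Z → ℝ} {n : ℕ}

lemma of_labels {β : Type*}
    (h : ∀ d : ℝ, 0 < d → ∃ (R : ℝ) (label : Z → β) (color : β → Fin (n + 1)),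
      (∀ x y, label x = label y → ρ x y ≤ R) ∧
      (∀ x y, color (label x) = color (label y) → label x ≠ label y → d ≤ ρ x y)) :
    ASDimLEdist ρ n := by
  intro d hd
  obtain ⟨R, label, color, hbdd, hsep⟩ := h d hd
  refine ⟨fun i => (fun b => label ⁻¹' {b}) '' (color ⁻¹' {i}), fun i => ⟨⟨R, ?_⟩, ?_⟩, ?_⟩
  · rintro _ ⟨b, -, rfl⟩ x (hx : label x = b) y (hy : label y = b)
    exact hbdd x y (hx.trans hy.symm)
  · rintro _ ⟨b, hb : color b = i, rfl⟩ _ ⟨c, hc : color c = i, rfl⟩ hbc x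
      (hx : label x = b) y (hy : label y = c)
    exact hsep x y (by rw [hx, hy, hb, hc]) fun hxy => hbc (by rw [← hx, ← hy, hxy])
  · exact fun z => ⟨color (label z), _, ⟨label z, rfl, rfl⟩, rfl⟩

lemma comp {S : Type*} (h : ASDimLEdist ρ n) (f : S → Z) :
    ASDimLEdist (fun a b => ρ (f a) (f b)) n := by
  intro d hd
  obtain ⟨𝔘, h𝔘, hcover⟩ := h d hd
  refine ⟨fun i => (fun U => f ⁻¹' U) '' 𝔘 i, fun i => ⟨?_, ?_⟩, ?_⟩
  · obtain ⟨R, hR⟩ := (h𝔘 i).1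
    exact ⟨R, by rintro _ ⟨U, hU, rfl⟩ x hx y hy; exact hR U hU _ hx _ hy⟩
  · rintro _ ⟨U, hU, rfl⟩ _ ⟨V, hV, rfl⟩ hne x hx y hy
    exact (h𝔘 i).2 U hU V hV (by rintro rfl; exact hne rfl) _ hx _ hy
  · intro z
    obtain ⟨i, U, hU, hz⟩ := hcover (f z)
    exact ⟨i, f ⁻¹' U, ⟨U, hU, rfl⟩, hz⟩

end ASDimLEdist

lemma Nat.add_lt_of_div_add_two_le {a b D : ℕ} (h : a / D + 2 ≤ b / D) : a + D < b := by
  rcases Nat.eq_zero_or_pos D with rfl | hD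
  · simp at h
  have ha := Nat.lt_div_mul_add (a := a) hD
  have hb := Nat.div_mul_le_self b D
  have hab := Nat.mul_le_mul_right D h
  rw [add_mul] at hab
  omega

lemma Nat.sub_pred_div_mul_lt (a : ℕ) {D : ℕ} (hD : 0 < D) :
    a - (a / D - 1) * D < 2 * D := by
  have := Nat.lt_div_mul_add (a := a) hD
  rw [Nat.sub_one_mul]
  omega

namespace SimpleGraph

variable {V : Type*} {G : SimpleGraph V}

lemma IsAcyclic.eq_of_length_eq_dist (hG : G.IsAcyclic) {u v : V} {p q : G.Walk u v}
    (hp : p.length = G.dist u v) (hq : q.length = G.dist u v) : p = q :=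
  haveI := hG.subsingleton_path u v
  congrArg Subtype.val <| Subsingleton.elim (α := G.Path u v)
    ⟨p, p.isPath_of_length_eq_dist hp⟩ ⟨q, q.isPath_of_length_eq_dist hq⟩

namespace IsTree

variable (hG : G.IsTree) (x₀ : V)

/-- The vertex at distance `m` from `x₀` on the geodesic from `x₀` to `v`; it is `v` itself
when `m ≥ G.dist x₀ v`. -/
noncomputable def ancestor (m : ℕ) (v : V) : V :=
  (hG.connected.exists_walk_length_eq_dist x₀ v).choose.getVert m

variable {x₀}

lemma getVert_eq_ancestor {v : V} {p : G.Walk x₀ v} (hp : p.length = G.dist x₀ v) (m : ℕ) :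
    p.getVert m = hG.ancestor x₀ m v := by
  rw [ancestor, hG.isAcyclic.eq_of_length_eq_dist hp
    (hG.connected.exists_walk_length_eq_dist x₀ v).choose_spec]

@[simp]
lemma ancestor_zero (v : V) : hG.ancestor x₀ 0 v = x₀ :=
  Walk.getVert_zero _

lemma dist_ancestor_le (m : ℕ) (v : V) :
    G.dist (hG.ancestor x₀ m v) v ≤ G.dist x₀ v - m := by
  obtain ⟨p, hp⟩ := hG.connected.exists_walk_length_eq_dist x₀ v
  rw [← hG.getVert_eq_ancestor hp, ← hp, ← Walk.drop_length]
  exact dist_le _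

lemma ancestor_eq_of_adj {a b : V} (hab : G.Adj a b) (hb : G.dist x₀ b = G.dist x₀ a + 1)
    {m : ℕ} (hm : m ≤ G.dist x₀ a) : hG.ancestor x₀ m b = hG.ancestor x₀ m a := by
  obtain ⟨p, hp⟩ := hG.connected.exists_walk_length_eq_dist x₀ a
  have hpb : (p.concat hab).length = G.dist x₀ b := by rw [Walk.length_concat, hp, hb]
  rw [← hG.getVert_eq_ancestor hpb, ← hG.getVert_eq_ancestor hp, Walk.concat_eq_append,
    Walk.getVert_append', if_pos (hp ▸ hm)]

lemma ancestor_eq_of_walk {m : ℕ} {v w : V} (r : G.Walk v w)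
    (hr : ∀ c ∈ r.support, m ≤ G.dist x₀ c) : hG.ancestor x₀ m v = hG.ancestor x₀ m w := by
  induction r with
  | nil => rfl
  | @cons a b w hab r ih =>
    rw [← ih fun c hc => hr c (by simp [hc])]
    have ha := hr a (by simp)
    have hb := hr b (by simp)
    rcases hG.dist_eq_dist_add_one_of_adj x₀ hab with h | h
    · exact hG.ancestor_eq_of_adj hab.symm h hb
    · exact (hG.ancestor_eq_of_adj hab h ha).symm

lemma dist_add_le_of_ancestor_ne {m : ℕ} {v w : V}
    (h : hG.ancestor x₀ m v ≠ hG.ancestor x₀ m w) :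
    G.dist x₀ v + G.dist x₀ w + 2 ≤ G.dist v w + 2 * m := by
  obtain ⟨r, hr⟩ := hG.connected.exists_walk_length_eq_dist v w
  obtain ⟨c, hc, hcm⟩ : ∃ c ∈ r.support, G.dist x₀ c < m := by
    by_contra! hcon
    exact h (hG.ancestor_eq_of_walk r hcon)
  obtain ⟨r₁, r₂, rfl⟩ := Walk.mem_support_iff_exists_append.mp hc
  have h₁ := dist_le r₁
  have h₂ := dist_le r₂
  have hv := hG.connected.dist_triangle (u := x₀) (v := c) (w := v)
  have hw := hG.connected.dist_triangle (u := x₀) (v := c) (w := w)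
  rw [Walk.length_append] at hr
  rw [dist_comm (u := c)] at hv
  omega

variable (x₀) in
/-- The annulus index `k = ⌊dist x₀ v / D⌋` of `v` and its ancestor at level `(k - 1) * D`
(at level `0` when `k = 0`, by truncated subtraction). -/
noncomputable def clusterLabel (D : ℕ) (v : V) : ℕ × V :=
  (G.dist x₀ v / D, hG.ancestor x₀ ((G.dist x₀ v / D - 1) * D) v)

lemma dist_le_of_clusterLabel_eq {D : ℕ} (hD : 0 < D) {x y : V}
    (h : hG.clusterLabel x₀ D x = hG.clusterLabel x₀ D y) : G.dist x y ≤ 4 * D := by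
  obtain ⟨hk, ha⟩ := Prod.mk.inj h
  set m := (G.dist x₀ x / D - 1) * D
  set a := hG.ancestor x₀ m x
  have hax : G.dist x a ≤ G.dist x₀ x - m := dist_comm (G := G) ▸ hG.dist_ancestor_le m x
  have hay : G.dist a y ≤ G.dist x₀ y - m := by
    rw [show a = hG.ancestor x₀ m y by rw [ha, ← hk]]
    exact hG.dist_ancestor_le m y
  have hx := Nat.sub_pred_div_mul_lt (G.dist x₀ x) hD
  have hy := Nat.sub_pred_div_mul_lt (G.dist x₀ y) hD
  rw [← hk] at hy
  calc G.dist x y ≤ G.dist x a + G.dist a y := hG.connected.dist_triangle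
    _ ≤ 4 * D := by omega

lemma lt_dist_of_clusterLabel_ne {D : ℕ} {x y : V}
    (hpar : (hG.clusterLabel x₀ D x).1 % 2 = (hG.clusterLabel x₀ D y).1 % 2)
    (hne : hG.clusterLabel x₀ D x ≠ hG.clusterLabel x₀ D y) : D < G.dist x y := by
  simp only [clusterLabel] at hpar hne
  set kx := G.dist x₀ x / D
  set ky := G.dist x₀ y / D
  by_cases hk : kx = ky
  · have hanc : hG.ancestor x₀ ((kx - 1) * D) x ≠ hG.ancestor x₀ ((kx - 1) * D) y := by
      rw [hk] at hne ⊢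
      exact fun h => hne (by rw [h])
    have hk0 : 0 < kx := by
      rw [Nat.pos_iff_ne_zero]
      rintro h0
      simp [h0] at hanc
    have hD : D ≤ kx * D := Nat.le_mul_of_pos_left D hk0
    have hsep := hG.dist_add_le_of_ancestor_ne hanc
    have hx : kx * D ≤ G.dist x₀ x := Nat.div_mul_le_self _ _
    have hy : kx * D ≤ G.dist x₀ y := hk ▸ Nat.div_mul_le_self _ _
    rw [Nat.sub_one_mul] at hsep
    omega
  · have hx := hG.connected.dist_triangle (u := x₀) (v := x) (w := y)
    have hy := hG.connected.dist_triangle (u := x₀) (v := y) (w := x)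
    rw [dist_comm (u := y)] at hy
    rcases (by omega : kx + 2 ≤ ky ∨ ky + 2 ≤ kx) with h | h
    · have := Nat.add_lt_of_div_add_two_le h
      omega
    · have := Nat.add_lt_of_div_add_two_le h
      omega

end IsTree

theorem IsTree.asdimLEdist_one (hG : G.IsTree) : ASDimLEdist (fun u v => (G.dist u v : ℝ)) 1 := by
  obtain ⟨x₀⟩ := hG.connected.nonempty
  refine ASDimLEdist.of_labels fun d hd => ⟨4 * ⌈d⌉₊, hG.clusterLabel x₀ ⌈d⌉₊,
    fun l => ⟨l.1 % 2, Nat.mod_lt _ two_pos⟩, fun x y h => ?_, fun x y hpar hne => ?_⟩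
  · exact_mod_cast hG.dist_le_of_clusterLabel_eq (Nat.ceil_pos.mpr hd) h
  · exact (Nat.le_ceil d).trans
      (by exact_mod_cast (hG.lt_dist_of_clusterLabel_ne (Fin.mk.inj_iff.mp hpar) hne).le)

end SimpleGraph

theorem asdim_tree_le_one_general {X : Type*} (T : SimpleGraph X) (hT : T.IsTree)
    {Γ : Type*} [Group Γ] [MulAction Γ X]
    (x₀ : X) :
    ASDimLEdist (fun u v : X => (T.dist u v : ℝ)) 1 ∧
    ASDimLEdist
      (fun u v : ↥(MulAction.orbit Γ x₀) => (T.dist (u : X) (v : X) : ℝ)) 1 :=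
  ⟨hT.asdimLEdist_one, hT.asdimLEdist_one.comp Subtype.val⟩

/-- Every tree (with its geodesic path metric) has asymptotic dimension at most 1; in
particular, for a group `Γ` acting by isometries on a tree `X` with base point `x₀`, the
orbit `Γ • x₀` (with the restricted metric) satisfies `asdim (Γ • x₀) ≤ 1`. -/
theorem asdim_tree_le_one {X : Type*} (T : SimpleGraph X) (hT : T.IsTree)
    {Γ : Type*} [Group Γ] [MulAction Γ X]
    (hiso : ∀ (g : Γ) (u v : X), T.Adj u v ↔ T.Adj (g • u) (g • v))
    (x₀ : X) :
    ASDimLEdist (fun u v : X => (T.dist u v : ℝ)) 1 ∧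
    ASDimLEdist
      (fun u v : ↥(MulAction.orbit Γ x₀) => (T.dist (u : X) (v : X) : ℝ)) 1 :=
  asdim_tree_le_one_general T hT x₀
end

section
/- Let a group Γ act on a tree with compact quotient and finitely generated vertex stabilizers Γ_x satisfying asdim Γ_x ≤ n for all vertices x. Then for every R > 0 and base vertex x₀, the R-stabilizer W_R(x₀) = {g ∈ Γ : d(g·x₀, x₀) ≤ R} satisfies asdim W_R(x₀) ≤ n. -/
/-!
By induction on `k`, every set `{g | d(g • x, y) ≤ k}` has asymptotic dimension `≤ n`. For
`k = 0` it is a left coset of the stabilizer of `x`. For `k + 1`, split it into the fibres of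
`g ↦ g • x`: they are uniformly of asymptotic dimension `≤ n`, being subsets of left cosets of
a stabilizer, so the union theorem of Bell and Dranishnikov applies once the fibres are separated
outside a set of asymptotic dimension `≤ n`. If `a`, `b` lie in different fibres at word distance
`< r`, then `u = a⁻¹ b` is short and moves `x`, and the distinct vertices `a • x`, `a • u • x` are
both within `k + 1` of `y`. In a tree this forces `a • x` or `a • m` to lie within `k` of `y`,
where `m` is the first step from `x` towards `u • x`. As word balls are finite, the exceptional
elements form a finite union of sets of the previous level.
-/

open Set

/-- The word distance on a group associated with a (symmetric) generating set `S`. -/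
noncomputable def wordDist {Γ : Type*} [Group Γ] (S : Set Γ) (g h : Γ) : ℕ :=
  sInf {n : ℕ | ∃ l : List Γ, l.length = n ∧ (∀ s ∈ l, s ∈ S) ∧ l.prod = g⁻¹ * h}

section WordDist

variable {Γ : Type*} [Group Γ] {S : Set Γ}

lemma wordDist_mul_left (S : Set Γ) (k a b : Γ) : wordDist S (k * a) (k * b) = wordDist S a b := by
  simp only [wordDist, mul_inv_rev, mul_assoc, inv_mul_cancel_left]

lemma wordDist_one_left (S : Set Γ) (a b : Γ) : wordDist S 1 (a⁻¹ * b) = wordDist S a b := by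
  simpa using wordDist_mul_left S a⁻¹ a b

lemma wordDist_le_length {a b : Γ} {l : List Γ} (hl : ∀ s ∈ l, s ∈ S) (hprod : l.prod = a⁻¹ * b) :
    wordDist S a b ≤ l.length :=
  Nat.sInf_le ⟨l, rfl, hl, hprod⟩

lemma wordDist_self (a : Γ) : wordDist S a a = 0 :=
  Nat.le_zero.mp (wordDist_le_length (l := []) (by simp) (by simp))

variable (hgen : Subgroup.closure S = ⊤) (hsym : ∀ s ∈ S, s⁻¹ ∈ S)
include hgen hsym

lemma exists_list_prod_eq (g : Γ) : ∃ l : List Γ, (∀ s ∈ l, s ∈ S) ∧ l.prod = g := by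
  induction (hgen ▸ Subgroup.mem_top g : g ∈ Subgroup.closure S)
    using Subgroup.closure_induction_left with
  | one => exact ⟨[], by simp, List.prod_nil⟩
  | mul_left s hs g _ ih =>
    obtain ⟨l, hl, rfl⟩ : ∃ l : List Γ, (∀ s ∈ l, s ∈ S) ∧ l.prod = g := ih
    exact ⟨s :: l, by simpa [hs] using hl, rfl⟩
  | inv_mul_cancel s hs _ _ ih =>
    obtain ⟨l, hl, rfl⟩ := ih
    exact ⟨s⁻¹ :: l, by simpa [hsym s hs] using hl, rfl⟩

lemma exists_length_eq_wordDist (a b : Γ) :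
    ∃ l : List Γ, l.length = wordDist S a b ∧ (∀ s ∈ l, s ∈ S) ∧ l.prod = a⁻¹ * b := by
  obtain ⟨l, hl, hprod⟩ := exists_list_prod_eq hgen hsym (a⁻¹ * b)
  exact Nat.sInf_mem (s := {n | ∃ l : List Γ, l.length = n ∧ (∀ s ∈ l, s ∈ S) ∧ l.prod = a⁻¹ * b})
    ⟨l.length, l, rfl, hl, hprod⟩

lemma wordDist_comm (a b : Γ) : wordDist S a b = wordDist S b a := by
  suffices h : ∀ a b : Γ, wordDist S b a ≤ wordDist S a b from le_antisymm (h b a) (h a b)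
  intro a b
  obtain ⟨l, hlen, hl, hprod⟩ := exists_length_eq_wordDist hgen hsym a b
  calc wordDist S b a ≤ (l.map (·⁻¹)).reverse.length :=
        wordDist_le_length (fun s hs => by
          obtain ⟨t, ht, rfl⟩ := List.mem_map.mp (List.mem_reverse.mp hs)
          exact hsym t (hl t ht))
          (by rw [← List.prod_inv_reverse, hprod, mul_inv_rev, inv_inv])
    _ = wordDist S a b := by simp [hlen]

lemma wordDist_triangle (a b c : Γ) : wordDist S a c ≤ wordDist S a b + wordDist S b c := by
  obtain ⟨l₁, hlen₁, hl₁, hprod₁⟩ := exists_length_eq_wordDist hgen hsym a b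
  obtain ⟨l₂, hlen₂, hl₂, hprod₂⟩ := exists_length_eq_wordDist hgen hsym b c
  calc wordDist S a c ≤ (l₁ ++ l₂).length :=
        wordDist_le_length (by simpa using fun s hs => hs.elim (hl₁ s) (hl₂ s))
          (by rw [List.prod_append, hprod₁, hprod₂]; group)
    _ = wordDist S a b + wordDist S b c := by simp [hlen₁, hlen₂]

lemma finite_setOf_wordDist_le (hS : S.Finite) (a : Γ) (N : ℕ) :
    {g : Γ | wordDist S a g ≤ N}.Finite := by
  have := hS.to_subtype
  refine ((List.finite_length_le S N).image fun l => a * (l.map (↑)).prod).subset fun g hg => ?_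
  obtain ⟨l, hlen, hl, hprod⟩ := exists_length_eq_wordDist hgen hsym a g
  lift l to List S using hl
  rw [List.length_map] at hlen
  exact ⟨l, hlen.trans_le hg, show a * _ = g by rw [hprod, mul_inv_cancel_left]⟩

end WordDist

namespace Asdim

variable {α β ι : Type*} (ρ : α → α → ℝ)

structure IsPseudoMetric : Prop where
  self : ∀ x, ρ x x = 0
  comm : ∀ x y, ρ x y = ρ y x
  triangle : ∀ x y z, ρ x z ≤ ρ x y + ρ y z

def Close (d : ℝ) (U V : Set α) : Prop := ∃ x ∈ U, ∃ y ∈ V, ρ x y < d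

def IsBoundedDisjoint (R d : ℝ) (𝒰 : Set (Set α)) : Prop :=
  (∀ U ∈ 𝒰, ∀ x ∈ U, ∀ y ∈ U, ρ x y ≤ R) ∧ 𝒰.Pairwise fun U V => ¬ Close ρ d U V

def IsCover (n : ℕ) (R d : ℝ) (A : Set α) (𝒰 : Fin (n + 1) → Set (Set α)) : Prop :=
  (∀ i, IsBoundedDisjoint ρ R d (𝒰 i)) ∧ ∀ z ∈ A, ∃ i, ∃ U ∈ 𝒰 i, z ∈ U

def AsdimLE (n : ℕ) (A : Set α) : Prop :=
  ∀ d > 0, ∃ R, ∃ 𝒰, IsCover ρ n R d A 𝒰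

def UniformlyAsdimLE (n : ℕ) (A : ι → Set α) : Prop :=
  ∀ d > 0, ∃ R, ∀ i, ∃ 𝒰, IsCover ρ n R d (A i) 𝒰

variable {ρ} {n : ℕ} {R R' d : ℝ}

lemma not_close_iff {U V : Set α} : ¬ Close ρ d U V ↔ ∀ x ∈ U, ∀ y ∈ V, d ≤ ρ x y := by
  simp [Close]

lemma Close.mono {U V U' V' : Set α} (h : Close ρ d U V) (hU : U ⊆ U') (hV : V ⊆ V') :
    Close ρ d U' V' :=
  let ⟨x, hx, y, hy, hxy⟩ := h
  ⟨x, hU hx, y, hV hy, hxy⟩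

lemma Close.symm (hρ : IsPseudoMetric ρ) {U V : Set α} (h : Close ρ d U V) : Close ρ d V U :=
  let ⟨x, hx, y, hy, hxy⟩ := h
  ⟨y, hy, x, hx, hρ.comm y x ▸ hxy⟩

lemma IsBoundedDisjoint.image {ρ' : β → β → ℝ} {f : β → α} (hf : ∀ a b, ρ (f a) (f b) = ρ' a b)
    {𝒰 : Set (Set β)} (h : IsBoundedDisjoint ρ' R d 𝒰) :
    IsBoundedDisjoint ρ R d ((f '' ·) '' 𝒰) := by
  refine ⟨?_, ?_⟩
  · rintro _ ⟨U, hU, rfl⟩ _ ⟨x, hx, rfl⟩ _ ⟨y, hy, rfl⟩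
    exact hf x y ▸ h.1 U hU x hx y hy
  · rintro _ ⟨U, hU, rfl⟩ _ ⟨V, hV, rfl⟩ hne ⟨_, ⟨x, hx, rfl⟩, _, ⟨y, hy, rfl⟩, hxy⟩
    exact h.2 hU hV (fun hUV => hne (hUV ▸ rfl)) ⟨x, hx, y, hy, hf x y ▸ hxy⟩

lemma IsCover.image {ρ' : β → β → ℝ} {f : β → α} (hf : ∀ a b, ρ (f a) (f b) = ρ' a b)
    {B : Set β} {A : Set α} {𝒰 : Fin (n + 1) → Set (Set β)} (h : IsCover ρ' n R d B 𝒰)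
    (hA : A ⊆ f '' B) : IsCover ρ n R d A fun i => (f '' ·) '' 𝒰 i := by
  refine ⟨fun i => (h.1 i).image hf, ?_⟩
  intro _ hA'
  obtain ⟨z, hz, rfl⟩ := hA hA'
  obtain ⟨i, U, hU, hzU⟩ := h.2 z hz
  exact ⟨i, f '' U, ⟨U, hU, rfl⟩, z, hzU, rfl⟩

lemma IsCover.mono_bound {A : Set α} {𝒰 : Fin (n + 1) → Set (Set α)} (h : IsCover ρ n R d A 𝒰)
    (hR : R ≤ R') : IsCover ρ n R' d A 𝒰 :=
  ⟨fun i => ⟨fun U hU x hx y hy => ((h.1 i).1 U hU x hx y hy).trans hR, (h.1 i).2⟩, h.2⟩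

lemma AsdimLE.mono {A B : Set α} (hB : AsdimLE ρ n B) (hAB : A ⊆ B) : AsdimLE ρ n A := by
  intro d hd
  obtain ⟨R, 𝒰, h𝒰⟩ := hB d hd
  exact ⟨R, 𝒰, h𝒰.1, fun z hz => h𝒰.2 z (hAB hz)⟩

lemma UniformlyAsdimLE.mono {A B : ι → Set α} (hB : UniformlyAsdimLE ρ n B) (hAB : ∀ i, A i ⊆ B i) :
    UniformlyAsdimLE ρ n A := by
  intro d hd
  obtain ⟨R, hR⟩ := hB d hd
  refine ⟨R, fun i => ?_⟩
  obtain ⟨𝒰, h𝒰⟩ := hR i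
  exact ⟨𝒰, h𝒰.1, fun z hz => h𝒰.2 z (hAB i hz)⟩

lemma UniformlyAsdimLE.asdimLE {A : ι → Set α} (h : UniformlyAsdimLE ρ n A) (i : ι) :
    AsdimLE ρ n (A i) := by
  intro d hd
  obtain ⟨R, hR⟩ := h d hd
  exact ⟨R, hR i⟩

lemma asdimLE_empty : AsdimLE ρ n ∅ :=
  fun _ _ => ⟨0, fun _ => ∅, fun _ => ⟨by simp, by simp⟩, by simp⟩

lemma uniformlyAsdimLE_of_subset_image {B : Set α} (hB : AsdimLE ρ n B) {A : ι → Set α}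
    (h : ∀ i, ∃ f : α → α, (∀ a b, ρ (f a) (f b) = ρ a b) ∧ A i ⊆ f '' B) :
    UniformlyAsdimLE ρ n A := by
  intro d hd
  obtain ⟨R, 𝒰, h𝒰⟩ := hB d hd
  refine ⟨R, fun i => ?_⟩
  obtain ⟨f, hf, hA⟩ := h i
  exact ⟨_, h𝒰.image hf hA⟩

lemma asdimLEdist_subtype_iff (A : Set α) :
    ASDimLEdist (fun a b : A => ρ a b) n ↔ AsdimLE ρ n A := by
  refine ⟨fun h d hd => ?_, fun h d hd => ?_⟩
  · obtain ⟨𝒰, h𝒰, hcov⟩ := h d hd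
    choose R hR using fun i => (h𝒰 i).1
    let R' := Finset.univ.sup' Finset.univ_nonempty R
    have hsub : IsCover (fun a b : A => ρ a b) n R' d univ 𝒰 :=
      ⟨fun i => ⟨fun U hU x hx y hy => (hR i U hU x hx y hy).trans (Finset.le_sup' R (by simp)),
        fun U hU V hV hne => not_close_iff.2 ((h𝒰 i).2 U hU V hV hne)⟩, fun z _ => hcov z⟩
    exact ⟨R', _, hsub.image (fun _ _ => rfl) fun z hz => ⟨⟨z, hz⟩, trivial, rfl⟩⟩
  · obtain ⟨R, 𝒰, h𝒰, hcov⟩ := h d hd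
    refine ⟨fun i => (Subtype.val ⁻¹' ·) '' 𝒰 i, fun i => ⟨⟨R, ?_⟩, ?_⟩, fun z => ?_⟩
    · rintro _ ⟨U, hU, rfl⟩ x hx y hy
      exact (h𝒰 i).1 U hU x hx y hy
    · rintro _ ⟨U, hU, rfl⟩ _ ⟨V, hV, rfl⟩ hne x hx y hy
      exact not_close_iff.1 ((h𝒰 i).2 hU hV fun hUV => hne (hUV ▸ rfl)) x hx y hy
    · obtain ⟨i, U, hU, hz⟩ := hcov z z.2
      exact ⟨i, _, ⟨U, hU, rfl⟩, hz⟩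

section Saturation

variable (ρ) (d)

def saturation (𝒰 : Set (Set α)) (V : Set α) : Set α :=
  V ∪ ⋃₀ {U ∈ 𝒰 | Close ρ d U V}

/-- The saturated union `𝒱 ∪_d 𝒰` of Bell and Dranishnikov. -/
def saturatedUnion (𝒱 𝒰 : Set (Set α)) : Set (Set α) :=
  saturation ρ d 𝒰 '' 𝒱 ∪ {U ∈ 𝒰 | ∀ V ∈ 𝒱, ¬ Close ρ d U V}

variable {ρ d} {𝒱 𝒰 : Set (Set α)} {Ru RV r : ℝ}

lemma mem_saturation {V : Set α} {z : α} :
    z ∈ saturation ρ d 𝒰 V ↔ z ∈ V ∨ ∃ U ∈ 𝒰, Close ρ d U V ∧ z ∈ U := by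
  simp [saturation, and_assoc]

lemma subset_sUnion_saturatedUnion :
    ⋃₀ 𝒱 ∪ ⋃₀ 𝒰 ⊆ ⋃₀ saturatedUnion ρ d 𝒱 𝒰 := by
  rintro z (⟨V, hV, hz⟩ | ⟨U, hU, hz⟩)
  · exact ⟨_, Or.inl ⟨V, hV, rfl⟩, Or.inl hz⟩
  · by_cases hfar : ∀ V ∈ 𝒱, ¬ Close ρ d U V
    · exact ⟨U, Or.inr ⟨hU, hfar⟩, hz⟩
    · push Not at hfar
      obtain ⟨V, hV, hUV⟩ := hfar
      exact ⟨_, Or.inl ⟨V, hV, rfl⟩, mem_saturation.2 (Or.inr ⟨U, hU, hUV, hz⟩)⟩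

variable (hρ : IsPseudoMetric ρ)
include hρ

lemma eq_of_close_of_close {U V₁ V₂ : Set α} (hU : ∀ x ∈ U, ∀ y ∈ U, ρ x y ≤ Ru)
    (h𝒱 : 𝒱.Pairwise fun V V' => ¬ Close ρ r V V') (hr : d + Ru + d ≤ r)
    (hV₁ : V₁ ∈ 𝒱) (hV₂ : V₂ ∈ 𝒱) (h₁ : Close ρ d U V₁) (h₂ : Close ρ d U V₂) : V₁ = V₂ := by
  obtain ⟨x₁, hx₁, y₁, hy₁, h₁⟩ := h₁
  obtain ⟨x₂, hx₂, y₂, hy₂, h₂⟩ := h₂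
  refine h𝒱.eq hV₁ hV₂ fun hfar => not_close_iff.1 hfar y₁ hy₁ y₂ hy₂ |>.not_gt ?_
  linarith [hρ.triangle y₁ x₁ y₂, hρ.triangle x₁ x₂ y₂, hρ.comm y₁ x₁, hU x₁ hx₁ x₂ hx₂]

lemma saturatedUnion_bounded (hRud : 0 ≤ Ru + d) (h𝒱 : ∀ V ∈ 𝒱, ∀ x ∈ V, ∀ y ∈ V, ρ x y ≤ RV)
    (h𝒰 : ∀ U ∈ 𝒰, ∀ x ∈ U, ∀ y ∈ U, ρ x y ≤ Ru) :
    ∀ W ∈ saturatedUnion ρ d 𝒱 𝒰, ∀ x ∈ W, ∀ y ∈ W, ρ x y ≤ max Ru (RV + 2 * (Ru + d)) := by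
  rintro W (⟨V, hV, rfl⟩ | ⟨hW, -⟩) x hx y hy
  · have near : ∀ z ∈ saturation ρ d 𝒰 V, ∃ v ∈ V, ρ z v ≤ Ru + d := by
      intro z hz
      rcases mem_saturation.1 hz with hzV | ⟨U, hU, ⟨x', hx', v, hv, hx'v⟩, hzU⟩
      · exact ⟨z, hzV, hρ.self z ▸ hRud⟩
      · exact ⟨v, hv, by linarith [hρ.triangle z x' v, h𝒰 U hU z hzU x' hx']⟩
    obtain ⟨v, hv, hxv⟩ := near x hx
    obtain ⟨w, hw, hyw⟩ := near y hy
    refine le_max_of_le_right ?_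
    linarith [hρ.triangle x v y, hρ.triangle v w y, hρ.comm w y, h𝒱 V hV v hv w hw]
  · exact le_max_of_le_left (h𝒰 W hW x hx y hy)

lemma saturation_eq_of_close (hRud : 0 ≤ Ru + d) (h𝒱 : 𝒱.Pairwise fun V V' => ¬ Close ρ r V V')
    (hr : d + Ru + d ≤ r) (h𝒰 : IsBoundedDisjoint ρ Ru d 𝒰) {V W : Set α} (hV : V ∈ 𝒱)
    (hW : W ∈ saturatedUnion ρ d 𝒱 𝒰) (hclose : Close ρ d (saturation ρ d 𝒰 V) W) :
    W = saturation ρ d 𝒰 V := by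
  obtain ⟨x, hx, y, hy, hxy⟩ := hclose
  have hyx : ρ y x < d := hρ.comm x y ▸ hxy
  have huniq {U V₁ V₂} (hU : U ∈ 𝒰) :=
    eq_of_close_of_close hρ (h𝒰.1 U hU) h𝒱 hr (V₁ := V₁) (V₂ := V₂)
  have hU_eq {U₁ U₂} (hU₁ : U₁ ∈ 𝒰) (hU₂ : U₂ ∈ 𝒰) (hx : x ∈ U₁) (hy : y ∈ U₂) : U₁ = U₂ :=
    h𝒰.2.eq hU₁ hU₂ (not_not.2 ⟨x, hx, y, hy, hxy⟩)
  rcases mem_saturation.1 hx with hxV | ⟨U₁, hU₁, hU₁V, hxU₁⟩ <;>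
    rcases hW with ⟨V', hV', rfl⟩ | ⟨hW, hfar⟩
  · congr 1
    rcases mem_saturation.1 hy with hyV' | ⟨U₂, hU₂, hU₂V', hyU₂⟩
    · exact h𝒱.eq hV' hV fun hfar => not_close_iff.1 hfar y hyV' x hxV |>.not_gt (by linarith)
    · exact huniq hU₂ hV' hV hU₂V' ⟨y, hyU₂, x, hxV, hyx⟩
  · exact (hfar V hV ⟨y, hy, x, hxV, hyx⟩).elim
  · congr 1
    rcases mem_saturation.1 hy with hyV' | ⟨U₂, hU₂, hU₂V', hyU₂⟩
    · exact huniq hU₁ hV' hV ⟨x, hxU₁, y, hyV', hxy⟩ hU₁V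
    · obtain rfl := hU_eq hU₁ hU₂ hxU₁ hyU₂
      exact huniq hU₁ hV' hV hU₂V' hU₁V
  · obtain rfl := hU_eq hU₁ hW hxU₁ hy
    exact (hfar V hV hU₁V).elim

lemma IsBoundedDisjoint.saturatedUnion (h𝒱 : IsBoundedDisjoint ρ RV r 𝒱)
    (h𝒰 : IsBoundedDisjoint ρ Ru d 𝒰) (hRud : 0 ≤ Ru + d) (hr : d + Ru + d ≤ r) :
    IsBoundedDisjoint ρ (max Ru (RV + 2 * (Ru + d))) d (saturatedUnion ρ d 𝒱 𝒰) := by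
  refine ⟨saturatedUnion_bounded hρ hRud h𝒱.1 h𝒰.1, ?_⟩
  rintro W₁ hW₁ W₂ hW₂ hne hclose
  obtain ⟨V₁, hV₁, rfl⟩ | ⟨hU₁, -⟩ := id hW₁
  · exact hne (saturation_eq_of_close hρ hRud h𝒱.2 hr h𝒰 hV₁ hW₂ hclose).symm
  obtain ⟨V₂, hV₂, rfl⟩ | ⟨hU₂, -⟩ := hW₂
  · exact hne (saturation_eq_of_close hρ hRud h𝒱.2 hr h𝒰 hV₂ hW₁ (hclose.symm hρ))
  · exact h𝒰.2 hU₁ hU₂ hne hclose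

end Saturation

lemma isBoundedDisjoint_iUnion_inter {𝒜 : ι → Set (Set α)} {B : ι → Set α}
    (h𝒜 : ∀ a, IsBoundedDisjoint ρ R d (𝒜 a)) (hB : Pairwise fun a b => ¬ Close ρ d (B a) (B b)) :
    IsBoundedDisjoint ρ R d {P | ∃ a, ∃ U ∈ 𝒜 a, P = U ∩ B a} := by
  refine ⟨?_, ?_⟩
  · rintro _ ⟨a, U, hU, rfl⟩ x hx y hy
    exact (h𝒜 a).1 U hU x hx.1 y hy.1
  · rintro _ ⟨a, U, hU, rfl⟩ _ ⟨b, U', hU', rfl⟩ hne hclose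
    by_cases hab : a = b
    · subst hab
      exact (h𝒜 a).2 hU hU' (fun h => hne (h ▸ rfl))
        (hclose.mono inter_subset_left inter_subset_left)
    · exact hB hab (hclose.mono inter_subset_right inter_subset_right)

variable (hρ : IsPseudoMetric ρ)
include hρ

/-- The union theorem of Bell and Dranishnikov. -/
theorem asdimLE_iUnion {A : ι → Set α} (hA : UniformlyAsdimLE ρ n A)
    (hY : ∀ r > 0, ∃ Y, AsdimLE ρ n Y ∧ Pairwise fun a b => ¬ Close ρ r (A a \ Y) (A b \ Y)) :
    AsdimLE ρ n (⋃ a, A a) := by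
  intro d hd
  obtain ⟨Ru, hRu⟩ := hA d hd
  choose 𝒜 h𝒜 using fun a => (hRu a).imp fun _ h => h.mono_bound (le_max_left Ru 0)
  have hRud : 0 ≤ max Ru 0 + d := by linarith [le_max_right Ru 0]
  obtain ⟨Y, hYdim, hYsep⟩ := hY d hd
  obtain ⟨RV, 𝒱, h𝒱⟩ := hYdim (d + max Ru 0 + d) (by linarith)
  let 𝒞 : Fin (n + 1) → Set (Set α) := fun i => {P | ∃ a, ∃ U ∈ 𝒜 a i, P = U ∩ (A a \ Y)}
  have h𝒞 i : IsBoundedDisjoint ρ (max Ru 0) d (𝒞 i) :=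
    isBoundedDisjoint_iUnion_inter (fun a => (h𝒜 a).1 i) hYsep
  refine ⟨_, fun i => saturatedUnion ρ d (𝒱 i) (𝒞 i),
    fun i => (h𝒱.1 i).saturatedUnion hρ (h𝒞 i) hRud le_rfl, fun z hz => ?_⟩
  by_cases hzY : z ∈ Y
  · obtain ⟨i, V, hV, hzV⟩ := h𝒱.2 z hzY
    obtain ⟨W, hW, hzW⟩ := subset_sUnion_saturatedUnion (Or.inl ⟨V, hV, hzV⟩)
    exact ⟨i, W, hW, hzW⟩
  · obtain ⟨a, hza⟩ := mem_iUnion.1 hz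
    obtain ⟨i, U, hU, hzU⟩ := (h𝒜 a).2 z hza
    have hz𝒞 : z ∈ ⋃₀ 𝒞 i := ⟨_, ⟨a, U, hU, rfl⟩, hzU, hza, hzY⟩
    obtain ⟨W, hW, hzW⟩ := subset_sUnion_saturatedUnion (ρ := ρ) (d := d) (𝒱 := 𝒱 i) (Or.inr hz𝒞)
    exact ⟨i, W, hW, hzW⟩

lemma AsdimLE.union {A B : Set α} (hA : AsdimLE ρ n A) (hB : AsdimLE ρ n B) :
    AsdimLE ρ n (A ∪ B) := by
  rw [union_eq_iUnion]
  refine asdimLE_iUnion hρ (fun d hd => ?_) fun r _ => ⟨B, hB, ?_⟩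
  · obtain ⟨RA, 𝒰A, hA⟩ := hA d hd
    obtain ⟨RB, 𝒰B, hB⟩ := hB d hd
    refine ⟨max RA RB, Bool.rec ?_ ?_⟩
    · exact ⟨𝒰B, hB.mono_bound (le_max_right _ _)⟩
    · exact ⟨𝒰A, hA.mono_bound (le_max_left _ _)⟩
  · rintro (_ | _) (_ | _) hne ⟨x, hx, y, hy, -⟩ <;> simp_all

lemma asdimLE_biUnion {s : Set ι} (hs : s.Finite) {A : ι → Set α}
    (h : ∀ i ∈ s, AsdimLE ρ n (A i)) : AsdimLE ρ n (⋃ i ∈ s, A i) := by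
  induction s, hs using Set.Finite.induction_on with
  | empty => simpa using asdimLE_empty
  | insert _ _ ih =>
    rw [biUnion_insert]
    exact (h _ (mem_insert _ _)).union hρ (ih fun i hi => h i (mem_insert_of_mem _ hi))

end Asdim

namespace SimpleGraph

variable {V W : Type*} {G : SimpleGraph V}

lemma Reachable.dist_map_le {G' : SimpleGraph W} (f : G →g G') {u v : V} (h : G.Reachable u v) :
    G'.dist (f u) (f v) ≤ G.dist u v := by
  obtain ⟨w, hw⟩ := h.exists_walk_length_eq_dist
  rw [← hw, ← w.length_map f]
  exact dist_le _

lemma Walk.dist_add_dist_le_length [DecidableEq V] {u v w : V} (p : G.Walk u v)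
    (hw : w ∈ p.support) : G.dist u w + G.dist w v ≤ p.length := by
  calc G.dist u w + G.dist w v ≤ (p.takeUntil w hw).length + (p.dropUntil w hw).length :=
        add_le_add (dist_le _) (dist_le _)
    _ = p.length := by rw [← length_append, take_spec]

lemma Connected.exists_adj_dist_eq_add_one (hG : G.Connected) {u v : V} (huv : u ≠ v) :
    ∃ m, G.Adj u m ∧ G.dist u v = G.dist m v + 1 := by
  obtain ⟨w, hw⟩ := hG.exists_walk_length_eq_dist u v
  cases w with
  | nil => exact absurd rfl huv
  | @cons _ m _ hum w =>
    refine ⟨m, hum, le_antisymm ?_ ?_⟩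
    · have := hG.dist_triangle (u := u) (v := m) (w := v)
      rwa [dist_eq_one_iff_adj.2 hum, add_comm] at this
    · rw [← hw, Walk.length_cons]
      exact Nat.add_le_add_right (dist_le w) 1

/-- Trees are `0`-hyperbolic. -/
lemma IsTree.dist_add_dist_le_or (hG : G.IsTree) {p q m : V}
    (hm : G.dist p m + G.dist m q = G.dist p q) (y : V) :
    G.dist y m + G.dist m p ≤ G.dist y p ∨ G.dist y m + G.dist m q ≤ G.dist y q := by
  classical
  obtain ⟨a, ha⟩ := hG.connected.exists_walk_length_eq_dist p m
  obtain ⟨b, hb⟩ := hG.connected.exists_walk_length_eq_dist m q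
  obtain ⟨c, hc⟩ := hG.connected.exists_walk_length_eq_dist y p
  obtain ⟨e, he⟩ := hG.connected.exists_walk_length_eq_dist y q
  have hab : (a.append b).IsPath :=
    (a.append b).isPath_of_length_eq_dist (by rw [Walk.length_append, ha, hb, hm])
  have hbypass : (c.reverse.append e).bypass = a.append b :=
    congrArg Subtype.val <|
      (hG.isAcyclic.subsingleton_path p q).elim ⟨_, Walk.bypass_isPath _⟩ ⟨_, hab⟩
  have hmem : m ∈ (c.reverse.append e).support :=
    Walk.support_bypass_subset_support _
      (hbypass ▸ (Walk.mem_support_append_iff _ _).2 (Or.inr b.start_mem_support))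
  rw [Walk.mem_support_append_iff, Walk.support_reverse, List.mem_reverse] at hmem
  rcases hmem with h | h
  · exact Or.inl (hc ▸ c.dist_add_dist_le_length h)
  · exact Or.inr (he ▸ e.dist_add_dist_le_length h)

lemma IsTree.dist_le_or_dist_le (hG : G.IsTree) {p q m y : V} {k : ℕ} (hpm : G.Adj p m)
    (hmq : G.dist p q = G.dist m q + 1) (hp : G.dist p y ≤ k + 1) (hq : G.dist q y ≤ k + 1) :
    G.dist p y ≤ k ∨ G.dist m y ≤ k := by
  have hmid : G.dist p m + G.dist m q = G.dist p q := by
    rw [dist_eq_one_iff_adj.2 hpm, hmq, add_comm]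
  have hmed := hG.dist_add_dist_le_or hmid y
  have hparity := hG.dist_eq_dist_add_one_of_adj y hpm
  obtain ⟨h₁, h₂, h₃, h₄⟩ : G.dist p y = G.dist y p ∧ G.dist q y = G.dist y q ∧
      G.dist m y = G.dist y m ∧ G.dist m p = 1 :=
    ⟨dist_comm, dist_comm, dist_comm, dist_comm.trans (dist_eq_one_iff_adj.2 hpm)⟩
  omega

end SimpleGraph

section TreeAction

open Asdim

variable {Γ X : Type*} [Group Γ] [MulAction Γ X] {T : SimpleGraph X}

lemma dist_smul_smul (hT : T.Connected)
    (hiso : ∀ (g : Γ) (u v : X), T.Adj u v ↔ T.Adj (g • u) (g • v)) (g : Γ) (u v : X) :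
    T.dist (g • u) (g • v) = T.dist u v := by
  have hle (g : Γ) (u v : X) : T.dist (g • u) (g • v) ≤ T.dist u v :=
    (hT u v).dist_map_le ⟨(g • ·), (hiso g _ _).1⟩
  refine le_antisymm (hle g u v) ?_
  simpa using hle g⁻¹ (g • u) (g • v)

lemma exists_subset_setOf_dist_smul_le (hT : T.IsTree)
    (hiso : ∀ (g : Γ) (u v : X), T.Adj u v ↔ T.Adj (g • u) (g • v)) {p q : X} (hpq : p ≠ q)
    (y : X) (k : ℕ) :
    ∃ m : X, {g : Γ | T.dist (g • p) y ≤ k + 1 ∧ T.dist (g • q) y ≤ k + 1} ⊆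
      {g | T.dist (g • p) y ≤ k} ∪ {g | T.dist (g • m) y ≤ k} := by
  obtain ⟨m, hpm, hmq⟩ := hT.connected.exists_adj_dist_eq_add_one hpq
  refine ⟨m, fun g ⟨hp, hq⟩ => hT.dist_le_or_dist_le ((hiso g p m).1 hpm) ?_ hp hq⟩
  rwa [dist_smul_smul hT.connected hiso, dist_smul_smul hT.connected hiso]

variable {S : Set Γ} {n : ℕ}

lemma isPseudoMetric_wordDist (hgen : Subgroup.closure S = ⊤) (hsym : ∀ s ∈ S, s⁻¹ ∈ S) :
    IsPseudoMetric (wordDist S · · : Γ → Γ → ℝ) where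
  self a := by simp [wordDist_self]
  comm a b := by rw [wordDist_comm hgen hsym]
  triangle a b c := by exact_mod_cast wordDist_triangle hgen hsym a b c

lemma uniformlyAsdimLE_setOf_smul_eq {x : X}
    (hstab : AsdimLE (wordDist S · · : Γ → Γ → ℝ) n (MulAction.stabilizer Γ x)) :
    UniformlyAsdimLE (wordDist S · · : Γ → Γ → ℝ) n fun y : X => {g : Γ | g • x = y} := by
  refine uniformlyAsdimLE_of_subset_image hstab fun y => ?_
  by_cases hy : ∃ g₀ : Γ, g₀ • x = y
  · obtain ⟨g₀, rfl⟩ := hy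
    refine ⟨(g₀ * ·), fun a b => by simp [wordDist_mul_left], fun g hg => ⟨g₀⁻¹ * g, ?_, by group⟩⟩
    simp [MulAction.mem_stabilizer_iff, mul_smul, hg.out]
  · exact ⟨id, fun _ _ => rfl, fun g hg => (hy ⟨g, hg⟩).elim⟩

variable (hS : S.Finite) (hgen : Subgroup.closure S = ⊤) (hsym : ∀ s ∈ S, s⁻¹ ∈ S)
  (hT : T.IsTree) (hiso : ∀ (g : Γ) (u v : X), T.Adj u v ↔ T.Adj (g • u) (g • v))
include hS hgen hsym hT hiso

theorem asdimLE_setOf_dist_smul_le_succ {k : ℕ} {x : X} (y : X)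
    (hfib : UniformlyAsdimLE (wordDist S · · : Γ → Γ → ℝ) n fun w : X => {g : Γ | g • x = w})
    (ih : ∀ x y : X, AsdimLE (wordDist S · · : Γ → Γ → ℝ) n {g : Γ | T.dist (g • x) y ≤ k}) :
    AsdimLE (wordDist S · · : Γ → Γ → ℝ) n {g : Γ | T.dist (g • x) y ≤ k + 1} := by
  have hρ := isPseudoMetric_wordDist hgen hsym
  have hE : {g : Γ | T.dist (g • x) y ≤ k + 1} =
      ⋃ w, {g | g • x = w} ∩ {g | T.dist (g • x) y ≤ k + 1} := by
    ext g; simp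
  rw [hE]
  refine asdimLE_iUnion hρ (hfib.mono fun w => inter_subset_left) fun r _ => ?_
  let Z : Γ → Set Γ := fun u => {g | T.dist (g • x) y ≤ k + 1 ∧ T.dist (g • u • x) y ≤ k + 1}
  refine ⟨⋃ u ∈ {u : Γ | wordDist S 1 u ≤ ⌈r⌉₊ ∧ u • x ≠ x}, Z u, ?_, ?_⟩
  · refine asdimLE_biUnion hρ
      ((finite_setOf_wordDist_le hgen hsym hS 1 _).subset fun u hu => hu.1) fun u hu => ?_
    obtain ⟨m, hm⟩ := exists_subset_setOf_dist_smul_le hT hiso hu.2.symm y k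
    exact ((ih x y).union hρ (ih m y)).mono hm
  · rintro w w' hww' ⟨a, ⟨⟨rfl, ha⟩, haY⟩, b, ⟨⟨rfl, hb⟩, -⟩, hab⟩
    refine haY (mem_biUnion (x := a⁻¹ * b) ⟨?_, fun h => hww' ?_⟩ ⟨ha, ?_⟩)
    · rw [wordDist_one_left]
      exact_mod_cast (show (wordDist S a b : ℝ) < r from hab).le.trans (Nat.le_ceil r)
    · simpa [mul_smul] using (congrArg (a • ·) h).symm
    · rwa [smul_smul, mul_inv_cancel_left]

theorem asdimLE_setOf_dist_smul_le
    (hstab : ∀ x : X, AsdimLE (wordDist S · · : Γ → Γ → ℝ) n (MulAction.stabilizer Γ x))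
    (k : ℕ) (x y : X) :
    AsdimLE (wordDist S · · : Γ → Γ → ℝ) n {g : Γ | T.dist (g • x) y ≤ k} := by
  induction k generalizing x y with
  | zero =>
    have h0 : {g : Γ | T.dist (g • x) y ≤ 0} = {g | g • x = y} := by
      ext g; simp [hT.connected.dist_eq_zero_iff]
    exact h0 ▸ (uniformlyAsdimLE_setOf_smul_eq (hstab x)).asdimLE y
  | succ k ih =>
    exact asdimLE_setOf_dist_smul_le_succ hS hgen hsym hT hiso y
      (uniformlyAsdimLE_setOf_smul_eq (hstab x)) ih

end TreeAction

theorem asdim_R_stabilizer_le_general {Γ : Type*} [Group Γ] (S : Finset Γ)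
    (hgen : Subgroup.closure (S : Set Γ) = ⊤) (hsym : ∀ s ∈ S, s⁻¹ ∈ S)
    {X : Type*} (T : SimpleGraph X) (hT : T.IsTree)
    [MulAction Γ X]
    (hiso : ∀ (g : Γ) (u v : X), T.Adj u v ↔ T.Adj (g • u) (g • v))
    (n : ℕ)
    (hstab : ∀ x : X, ASDimLEdist
      (fun a b : MulAction.stabilizer Γ x =>
        (wordDist (S : Set Γ) (a : Γ) (b : Γ) : ℝ)) n) :
    ∀ (x₀ : X) (R : ℕ), 0 < R →
      ASDimLEdist
        (fun a b : {g : Γ // T.dist (g • x₀) x₀ ≤ R} =>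
          (wordDist (S : Set Γ) a.1 b.1 : ℝ)) n := by
  intro x₀ R _
  refine (Asdim.asdimLEdist_subtype_iff (ρ := (wordDist S · · : Γ → Γ → ℝ))
    {g : Γ | T.dist (g • x₀) x₀ ≤ R}).2 ?_
  exact asdimLE_setOf_dist_smul_le S.finite_toSet hgen hsym hT hiso
    (fun x => (Asdim.asdimLEdist_subtype_iff _).1 (hstab x)) R x₀ x₀

/-- Let a (finitely generated) group `Γ` act on a tree with compact (finite) quotient and
finitely generated vertex stabilizers `Γ_x` satisfying `asdim Γ_x ≤ n` (in the word
metric restricted from `Γ`) for all vertices `x`. Then for every `R > 0` and base vertex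
`x₀`, the `R`-stabilizer `W_R(x₀) = {g : d(g • x₀, x₀) ≤ R}`, with the restricted word
metric, satisfies `asdim W_R(x₀) ≤ n`. -/
theorem asdim_R_stabilizer_le {Γ : Type*} [Group Γ] (S : Finset Γ)
    (hgen : Subgroup.closure (S : Set Γ) = ⊤) (hsym : ∀ s ∈ S, s⁻¹ ∈ S)
    {X : Type*} (T : SimpleGraph X) (hT : T.IsTree)
    [MulAction Γ X]
    (hiso : ∀ (g : Γ) (u v : X), T.Adj u v ↔ T.Adj (g • u) (g • v))
    (hcompact : Finite (Quotient (MulAction.orbitRel Γ X)))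
    (n : ℕ)
    (hfg : ∀ x : X, Group.FG (MulAction.stabilizer Γ x))
    (hstab : ∀ x : X, ASDimLEdist
      (fun a b : MulAction.stabilizer Γ x =>
        (wordDist (S : Set Γ) (a : Γ) (b : Γ) : ℝ)) n) :
    ∀ (x₀ : X) (R : ℕ), 0 < R →
      ASDimLEdist
        (fun a b : {g : Γ // T.dist (g • x₀) x₀ ≤ R} =>
          (wordDist (S : Set Γ) a.1 b.1 : ℝ)) n :=
  asdim_R_stabilizer_le_general S hgen hsym T hT hiso n hstab
end
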